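/- arXiv:1606.08412 — 8 statements merged into one kernel-verified Lean document; each statement's English description precedes it below -/
import Mathlib

section
/- Let T(z) be the formal power series with T(0)=1 satisfying T(z) = 1 + z·T(z)^t for an integer t ≥ 2. Then ln T(z) = Σ_{n≥1} (1/(t·n))·C(t·n, n)·z^n as formal power series. -/
/-!
Since `T - 1 = X * T ^ t`, we have `(T - 1) ^ k = X ^ k * T ^ (t * k)`. The coefficients of the
powers of `T` are Raney numbers, `[z^n] T ^ r = r / (t * n + r) * C(t * n + r, n)`, by a double
induction on `n` and `r` driven by `T ^ (r + 1) = T ^ r + X * T ^ (r + t)`. Hence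
`[z^n] (T - 1) ^ k = k / n * C(t * n, n - k)`, the factor `1 / k` of the logarithm cancels, and the
remaining alternating sum `∑ (-1) ^ (k + 1) C(t * n, n - k)` collapses by Pascal's rule to
`C(t * n - 1, n - 1) = n / (t * n) * C(t * n, n)`.
-/

open Finset PowerSeries

theorem sum_range_neg_one_pow_mul_choose_sub {R : Type*} [CommRing R] (N n : ℕ) :
    ∑ i ∈ range (n + 1), (-1) ^ i * ((N + 1).choose (n - i) : R) = N.choose n := by
  induction n with
  | zero => simp
  | succ n ih =>
    rw [sum_range_succ']
    simp only [Nat.add_sub_add_right, pow_succ, mul_neg_one, neg_mul, sum_neg_distrib, ih,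
      pow_zero, one_mul, Nat.sub_zero, Nat.choose_succ_succ', Nat.cast_add]
    ring

theorem coeff_succ_pow_succ_of_eq_one_add_X_mul_pow {R : Type*} [CommRing R] {t : ℕ}
    {T : R⟦X⟧} (hT : T = 1 + X * T ^ t) (n r : ℕ) :
    coeff (n + 1) (T ^ (r + 1)) = coeff (n + 1) (T ^ r) + coeff n (T ^ (r + t)) := by
  have h : T ^ (r + 1) = T ^ r + X * T ^ (r + t) := by linear_combination T ^ r * hT
  rw [h, map_add, coeff_succ_X_mul]

theorem coeff_pow_mul_of_eq_one_add_X_mul_pow {K : Type*} [Field K] [CharZero K] {t : ℕ}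
    (ht : 0 < t) {T : K⟦X⟧} (hT : T = 1 + X * T ^ t) (n r : ℕ) :
    coeff n (T ^ r) * (t * n + r) = r * (t * n + r).choose n := by
  induction n generalizing r with
  | zero =>
    have h : constantCoeff T = 1 := by rw [hT]; simp
    simp [coeff_zero_eq_constantCoeff, h]
  | succ n ihn =>
    induction r with
    | zero => simp [coeff_one]
    | succ r ihr =>
      have hne : (t * (n + 1) + r : K) ≠ 0 := by
        norm_cast
        have := Nat.mul_pos ht n.add_one_pos
        omega
      have hb := ihn (r + t)
      rw [show t * n + (r + t) = t * (n + 1) + r by ring] at hb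
      have hc := congrArg (Nat.cast : ℕ → K) (Nat.add_one_mul_choose_eq (t * (n + 1) + r) n)
      have hd := congrArg (Nat.cast : ℕ → K) (Nat.choose_succ_succ' (t * (n + 1) + r) n)
      rw [coeff_succ_pow_succ_of_eq_one_add_X_mul_pow hT,
        show t * (n + 1) + (r + 1) = t * (n + 1) + r + 1 by ring]
      apply mul_right_cancel₀ hne
      push_cast at ihr hb hc hd ⊢
      linear_combination (t * (n + 1) + r + 1 : K) * (ihr + hb - r * hd) + t * hc

theorem coeff_sub_one_pow_of_eq_one_add_X_mul_pow {K : Type*} [Field K] [CharZero K] {t : ℕ}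
    (ht : 0 < t) {T : K⟦X⟧} (hT : T = 1 + X * T ^ t) {n k : ℕ} (hn : 0 < n) (hk : k ≤ n) :
    coeff n ((T - 1) ^ k) = (k / n * (t * n).choose (n - k) : K) := by
  have hS : T - 1 = X * T ^ t := by linear_combination hT
  have h := coeff_pow_mul_of_eq_one_add_X_mul_pow ht hT (n - k) (t * k)
  rw [show t * (n - k) + t * k = t * n by rw [← mul_add, Nat.sub_add_cancel hk]] at h
  rw [hS, mul_pow, ← pow_mul, coeff_X_pow_mul', if_pos hk]
  have hn' : (n : K) ≠ 0 := Nat.cast_ne_zero.mpr hn.ne'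
  have ht' : (t : K) ≠ 0 := Nat.cast_ne_zero.mpr ht.ne'
  push_cast [Nat.cast_sub hk] at h
  field_simp
  apply mul_left_cancel₀ ht'
  linear_combination h

/-- For `T = 1 + z·T^t` in `ℚ⟦z⟧` (`t ≥ 2`, `T(0)=1`), the formal
logarithm `ln T = Σ_{k≥1} (−1)^{k+1}(T−1)^k/k` satisfies
`[z^n] ln T = (1/(t·n))·C(t·n, n)` for all `n ≥ 1`.  Since `T − 1` has zero constant
term, `[z^n]` of the full logarithm equals `[z^n]` of the partial sum up to `k = n`. -/
theorem coeff_log_tree_series (t : ℕ) (ht : 2 ≤ t) (T : PowerSeries ℚ)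
    (hT : T = 1 + PowerSeries.X * T ^ t) (n : ℕ) (hn : 1 ≤ n) :
    PowerSeries.coeff (R := ℚ) n
        (∑ k ∈ Finset.Icc 1 n, ((-1 : ℚ) ^ (k + 1) / k) • (T - 1) ^ k) =
      1 / (t * n) * ((t * n).choose n) := by
  have ht₀ : 0 < t := by omega
  obtain ⟨m, rfl⟩ : ∃ m, n = m + 1 := ⟨n - 1, by omega⟩
  obtain ⟨N, hN⟩ : ∃ N, t * (m + 1) = N + 1 :=
    ⟨t * (m + 1) - 1, by have := Nat.mul_pos ht₀ m.add_one_pos; omega⟩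
  have hterm : ∀ k ∈ Icc 1 (m + 1), coeff (m + 1) (((-1 : ℚ) ^ (k + 1) / k) • (T - 1) ^ k) =
      ((-1) ^ (k + 1) * (N + 1).choose (m + 1 - k) / (m + 1) : ℚ) := by
    intro k hk
    have hk := mem_Icc.mp hk
    rw [map_smul, coeff_sub_one_pow_of_eq_one_add_X_mul_pow ht₀ hT m.add_one_pos hk.2,
      hN, smul_eq_mul]
    have : (k : ℚ) ≠ 0 := Nat.cast_ne_zero.mpr (by omega)
    field_simp
    push_cast
    ring
  have hreindex : ∑ k ∈ Icc 1 (m + 1), (-1 : ℚ) ^ (k + 1) * (N + 1).choose (m + 1 - k) / (m + 1) =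
      ∑ i ∈ range (m + 1), (-1 : ℚ) ^ i * (N + 1).choose (m - i) / (m + 1) := by
    rw [← Ico_add_one_right_eq_Icc, sum_Ico_eq_sum_range, Nat.add_sub_cancel]
    refine sum_congr rfl fun i _ => ?_
    rw [show 1 + i + 1 = i + 2 by ring, show m + 1 - (1 + i) = m - i by omega, pow_add,
      neg_one_sq, mul_one]
  have hchoose := congrArg (Nat.cast : ℕ → ℚ) (Nat.add_one_mul_choose_eq N m)
  rw [map_sum, sum_congr rfl hterm, hreindex, ← sum_div, sum_range_neg_one_pow_mul_choose_sub,
    hN]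
  push_cast at hchoose ⊢
  rw [show (t : ℚ) * (m + 1) = N + 1 by exact_mod_cast hN]
  field_simp
  linear_combination hchoose
end

section
/- As formal power series identities, (Σ_{k≥0} C(3k/2, k)/(k/2+1) · z^k) · (Σ_{k≥0} C(3k/2, k)/(k/2+1) · (−z)^k) = Σ_{n≥0} (1/(n+1))·C(3n+1, n) · z^{2n}, where C(3k/2,k) is interpreted via the generalized binomial coefficient (generalized binomial series of order 3/2). -/
open PowerSeries

/-- Generalized binomial coefficient `C(x,k) = x(x−1)⋯(x−k+1)/k!` for rational `x`. -/
def genBinom (x : ℚ) (k : ℕ) : ℚ := (∏ i ∈ Finset.range k, (x - i)) / (k.factorial : ℚ)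

/-- The generalized binomial series of order 3/2:
`T(z) = Σ_{k≥0} C(3k/2,k)/(k/2+1)·z^k`. -/
noncomputable def knuthT : PowerSeries ℚ :=
  PowerSeries.mk fun k => genBinom (3 * k / 2) k / ((k : ℚ) / 2 + 1)

/-- `T(−z)`. -/
noncomputable def knuthTneg : PowerSeries ℚ :=
  PowerSeries.mk fun k => (-1 : ℚ) ^ k * (genBinom (3 * k / 2) k / ((k : ℚ) / 2 + 1))

/-!
Write `𝓑_b(z)^a` for `∑ₙ P_n(a) zⁿ` with `P_n(a) = a/(a+bn)·C(a+bn, n)`, so that `T = 𝓑_{3/2}`.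
Pascal's rule gives `𝓑_b^{a+1} = 𝓑_b^a + z 𝓑_b^{a+b}`, and from it `𝓑_b^{a+c} = 𝓑_b^a 𝓑_b^c`
(Hagen–Rothe): each coefficient of the difference is a polynomial in `a` that vanishes at `a = 0`
and, by induction on its index, is `1`-periodic in `a`.

With `u = 𝓑_{3/2}^{1/2}` and `v(z) = u(-z)` we get `u² = 1 + z u³` and `v² = 1 - z v³`. The
difference of these equations is divisible by `u + v`, and eliminating gives `uv = 1 + z²(uv)³`,
the equation of the ternary-tree series `𝓑_3` at `z²`. Its solution is unique, so
`T(z)T(-z) = (uv)² = 𝓑_3(z²)²`, whose coefficients are `P_n(2) = C(3n+1, n)/(n+1)` for `b = 3`.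
-/

open Finset

@[simp]
lemma genBinom_zero (x : ℚ) : genBinom x 0 = 1 := by
  simp [genBinom]

lemma genBinom_succ (x : ℚ) (n : ℕ) :
    genBinom x (n + 1) = genBinom x n * (x - n) / (n + 1) := by
  simp only [genBinom, prod_range_succ, Nat.factorial_succ, Nat.cast_mul, Nat.cast_succ]
  field_simp

lemma genBinom_add_one_succ (x : ℚ) (n : ℕ) :
    genBinom (x + 1) (n + 1) = (x + 1) * genBinom x n / (n + 1) := by
  simp only [genBinom, prod_range_succ', Nat.factorial_succ, Nat.cast_mul, Nat.cast_succ]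
  field_simp
  simp only [Nat.cast_zero, sub_zero, add_sub_add_right_eq_sub, mul_comm]

lemma genBinom_natCast (N k : ℕ) : genBinom N k = N.choose k := by
  rw [Nat.cast_choose_eq_descPochhammer_div, descPochhammer_eval_eq_prod_range, genBinom]

section PolynomialFunctions

variable {K : Type*} [CommRing K]

variable (K) in
def polyFun : Subalgebra K (K → K) := Algebra.adjoin K {id}

lemma mem_polyFun_iff {f : K → K} : f ∈ polyFun K ↔ ∃ p : Polynomial K, ∀ x, f x = p.eval x := by
  simp only [polyFun, Algebra.adjoin_singleton_eq_range_aeval, AlgHom.mem_range, funext_iff,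
    Polynomial.aeval_fn_apply, id_eq, Polynomial.coe_aeval_eq_eval, eq_comm]

lemma comp_add_mem_polyFun {f : K → K} (hf : f ∈ polyFun K) (c : K) :
    (fun x => f (x + c)) ∈ polyFun K := by
  obtain ⟨p, hp⟩ := mem_polyFun_iff.mp hf
  exact mem_polyFun_iff.mpr ⟨p.comp (.X + .C c), by simp [hp]⟩

theorem eq_zero_of_periodic_of_mem_polyFun [IsDomain K] [CharZero K] {f : K → K}
    (hf : f ∈ polyFun K) (hper : Function.Periodic f 1) (h0 : f 0 = 0) : f = 0 := by
  obtain ⟨p, hp⟩ := mem_polyFun_iff.mp hf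
  have hroots : Set.range ((↑) : ℕ → K) ⊆ {x | p.eval x = (0 : Polynomial K).eval x} := by
    rintro _ ⟨n, rfl⟩
    simpa [← hp, h0] using hper.nat_mul_eq n
  have hp0 := Polynomial.eq_of_infinite_eval_eq p 0
    ((Set.infinite_range_of_injective Nat.cast_injective).mono hroots)
  ext x
  simp [hp, hp0]

end PolynomialFunctions

lemma genBinom_mem_polyFun (k : ℕ) : (fun x => genBinom x k) ∈ polyFun ℚ :=
  mem_polyFun_iff.mpr ⟨descPochhammer ℚ k * .C (k.factorial : ℚ)⁻¹, fun x => by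
    simp [genBinom, descPochhammer_eval_eq_prod_range, div_eq_mul_inv]⟩

/-- `P_n(a) = a / (a + b n) · C(a + b n, n)`, written without the division so that it is also
right when `a + b n = 0`. -/
def gould (b a : ℚ) : ℕ → ℚ
  | 0 => 1
  | n + 1 => a * genBinom (a + b * (n + 1) - 1) n / (n + 1)

@[simp]
lemma gould_zero (b a : ℚ) : gould b a 0 = 1 := rfl

@[simp]
lemma gould_zero_left_succ (b : ℚ) (n : ℕ) : gould b 0 (n + 1) = 0 := by
  simp [gould]

lemma gould_add_one_succ (b a : ℚ) (n : ℕ) :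
    gould b (a + 1) (n + 1) = gould b a (n + 1) + gould b (a + b) n := by
  cases n with
  | zero => simp [gould]
  | succ m =>
    set y := a + b * (m + 2) - 1
    have hy : a + 1 + b * ((m + 1 : ℕ) + 1 : ℚ) - 1 = y + 1 := by push_cast; ring
    have hy' : a + b * ((m + 1 : ℕ) + 1 : ℚ) - 1 = y := by push_cast; ring
    have hy'' : a + b + b * ((m : ℚ) + 1) - 1 = y := by ring
    simp only [gould]
    rw [hy, hy', hy'', genBinom_add_one_succ, genBinom_succ]
    push_cast
    field_simp
    ring

lemma gould_mem_polyFun (b : ℚ) (n : ℕ) : (fun a => gould b a n) ∈ polyFun ℚ := by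
  cases n with
  | zero => exact Subalgebra.one_mem _
  | succ n =>
    have : (fun a => gould b a (n + 1)) = id * (fun a => genBinom (a + (b * (n + 1) - 1)) n) *
        algebraMap ℚ _ ((n : ℚ) + 1)⁻¹ := by
      ext a
      simp [gould, div_eq_mul_inv, add_sub_assoc]
    rw [this]
    exact mul_mem (mul_mem (Algebra.self_mem_adjoin_singleton ℚ id)
      (comp_add_mem_polyFun (genBinom_mem_polyFun n) _)) (Subalgebra.algebraMap_mem _ _)

noncomputable def gouldSeries (b a : ℚ) : ℚ⟦X⟧ := mk (gould b a)

@[simp]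
lemma coeff_gouldSeries (b a : ℚ) (n : ℕ) : coeff n (gouldSeries b a) = gould b a n :=
  coeff_mk n _

@[simp]
lemma gouldSeries_zero (b : ℚ) : gouldSeries b 0 = 1 := by
  ext (_ | n) <;> simp [coeff_one]

@[simp]
lemma constantCoeff_gouldSeries (b a : ℚ) : constantCoeff (gouldSeries b a) = 1 := by
  rw [← coeff_zero_eq_constantCoeff_apply, coeff_gouldSeries, gould_zero]

lemma gouldSeries_add_one (b a : ℚ) :
    gouldSeries b (a + 1) = gouldSeries b a + X * gouldSeries b (a + b) := by
  ext (_ | n)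
  · simp
  · simp [coeff_succ_X_mul, gould_add_one_succ]

lemma coeff_gouldSeries_mul_mem_polyFun (b : ℚ) (φ : ℚ⟦X⟧) (n : ℕ) :
    (fun a => coeff n (gouldSeries b a * φ)) ∈ polyFun ℚ := by
  have : (fun a => coeff n (gouldSeries b a * φ)) =
      ∑ p ∈ antidiagonal n, (fun a => gould b a p.1) * algebraMap ℚ _ (coeff p.2 φ) := by
    ext a
    simp [coeff_mul, Finset.sum_apply]
  rw [this]
  exact sum_mem fun p _ => mul_mem (gould_mem_polyFun b p.1) (Subalgebra.algebraMap_mem _ _)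

theorem PowerSeries.eq_zero_of_sub_eq_X_mul {K : Type*} [CommRing K] [IsDomain K] [CharZero K]
    {D : K → K⟦X⟧} {b : K} (hpoly : ∀ n, (fun a => coeff n (D a)) ∈ polyFun K)
    (hD : ∀ a, D (a + 1) - D a = X * D (a + b)) (h0 : D 0 = 0) (a : K) : D a = 0 := by
  have step (n : ℕ) (hX : ∀ a, coeff n (X * D (a + b)) = 0) (a : K) : coeff n (D a) = 0 := by
    have hper : Function.Periodic (fun a => coeff n (D a)) 1 := fun a => by
      rw [← sub_eq_zero, ← map_sub, hD, hX]
    simpa using congrFun (eq_zero_of_periodic_of_mem_polyFun (hpoly n) hper (by simp [h0])) a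
  ext n
  induction n generalizing a with
  | zero => exact step 0 (fun _ => by simp) a
  | succ n ih => exact step (n + 1) (fun _ => by rw [coeff_succ_X_mul, ih, map_zero]) a

theorem gouldSeries_add (b a c : ℚ) :
    gouldSeries b (a + c) = gouldSeries b a * gouldSeries b c := by
  have hD (a : ℚ) : (gouldSeries b (a + 1) * gouldSeries b c - gouldSeries b (a + 1 + c)) -
      (gouldSeries b a * gouldSeries b c - gouldSeries b (a + c)) =
      X * (gouldSeries b (a + b) * gouldSeries b c - gouldSeries b (a + b + c)) := by
    rw [add_right_comm a 1 c, gouldSeries_add_one, gouldSeries_add_one, add_right_comm a c b]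
    ring
  have hpoly (n : ℕ) : (fun a => coeff n (gouldSeries b a * gouldSeries b c -
      gouldSeries b (a + c))) ∈ polyFun ℚ := by
    simp only [map_sub, coeff_gouldSeries]
    exact sub_mem (coeff_gouldSeries_mul_mem_polyFun b _ n)
      (comp_add_mem_polyFun (gould_mem_polyFun b n) c)
  exact (sub_eq_zero.mp (eq_zero_of_sub_eq_X_mul hpoly hD (by simp) a)).symm

lemma gouldSeries_pow (b a : ℚ) (n : ℕ) : gouldSeries b a ^ n = gouldSeries b (n * a) := by
  induction n with
  | zero => simp
  | succ n ih => rw [pow_succ, ih, ← gouldSeries_add]; push_cast; ring_nf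

lemma gouldSeries_one (b : ℚ) : gouldSeries b 1 = 1 + X * gouldSeries b b := by
  simpa using gouldSeries_add_one b 0

theorem mul_eq_one_add_sq_mul_pow_three {R : Type*} [CommRing R] [NoZeroDivisors R] {z u v : R}
    (hu : u ^ 2 = 1 + z * u ^ 3) (hv : v ^ 2 = 1 - z * v ^ 3) (huv : u + v ≠ 0) :
    u * v = 1 + z ^ 2 * (u * v) ^ 3 := by
  have hA : u - v = z * (u ^ 2 - u * v + v ^ 2) := by
    have : (u + v) * (u - v - z * (u ^ 2 - u * v + v ^ 2)) = 0 := by linear_combination hu - hv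
    exact sub_eq_zero.mp ((mul_eq_zero.mp this).resolve_left huv)
  have hB : u * v * (1 - z * (u - v)) = 1 := by linear_combination hu - u * hA
  have hC : u - v = z * (u * v) ^ 2 := by linear_combination (u * v) * hA - (u - v) * hB
  linear_combination hB + z * u * v * hC

theorem PowerSeries.eq_of_eq_one_add_mul_pow_three {R : Type*} [CommRing R] {t P Q : R⟦X⟧}
    (ht : constantCoeff t = 0) (hP : P = 1 + t * P ^ 3) (hQ : Q = 1 + t * Q ^ 3) : P = Q := by
  have hunit : IsUnit (1 - t * (P ^ 2 + P * Q + Q ^ 2)) := by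
    simp [isUnit_iff_constantCoeff, ht]
  have : (P - Q) * (1 - t * (P ^ 2 + P * Q + Q ^ 2)) = 0 := by linear_combination hP - hQ
  exact sub_eq_zero.mp (hunit.mul_left_eq_zero.mp this)

lemma knuthT_eq_gouldSeries : knuthT = gouldSeries (3 / 2) 1 := by
  ext (_ | n)
  · simp [knuthT]
  · have hx : (1 : ℚ) + 3 / 2 * (n + 1) - 1 = 3 * ((n + 1 : ℕ) : ℚ) / 2 := by push_cast; ring
    simp only [knuthT, coeff_mk, coeff_gouldSeries, gould, hx, genBinom_succ]
    push_cast
    field_simp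
    ring

lemma knuthTneg_eq_rescale : knuthTneg = rescale (-1) knuthT := by
  ext n
  simp [knuthTneg, knuthT, coeff_rescale]

lemma gould_three_two (n : ℕ) : gould 3 2 n = (3 * n + 1).choose n / (n + 1) := by
  cases n with
  | zero => simp
  | succ n =>
    have hN : (2 : ℚ) + 3 * (n + 1) - 1 = ((3 * n + 4 : ℕ) : ℚ) := by push_cast; ring
    have hchoose := Nat.choose_succ_right_eq (3 * n + 4) n
    rw [show 3 * n + 4 - n = 2 * n + 4 by omega] at hchoose
    simp only [gould, hN, genBinom_natCast, show 3 * (n + 1) + 1 = 3 * n + 4 by ring]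
    field_simp
    have := congrArg (Nat.cast (R := ℚ)) hchoose
    push_cast at this ⊢
    linear_combination -this

theorem gouldSeries_half_mul_rescale_neg_one :
    gouldSeries (3 / 2) (1 / 2) * rescale (-1) (gouldSeries (3 / 2) (1 / 2)) =
      expand 2 two_ne_zero (gouldSeries 3 1) := by
  set u := gouldSeries (3 / 2) (1 / 2)
  have hu : u ^ 2 = 1 + X * u ^ 3 := by
    rw [gouldSeries_pow, gouldSeries_pow]
    norm_num [gouldSeries_one]
  have hv : rescale (-1) u ^ 2 = 1 - X * rescale (-1) u ^ 3 := by
    simpa [← map_pow, rescale_X, ← sub_eq_add_neg] using congrArg (rescale (-1)) hu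
  have huv : u + rescale (-1) u ≠ 0 := fun h => by
    have h0 := congrArg (coeff 0) h
    rw [map_add, coeff_rescale, coeff_gouldSeries, gould_zero] at h0
    norm_num at h0
  have hU : gouldSeries 3 1 = 1 + X * gouldSeries 3 1 ^ 3 := by
    rw [gouldSeries_pow, gouldSeries_one]
    norm_num
  refine eq_of_eq_one_add_mul_pow_three (t := X ^ 2) (by simp)
    (mul_eq_one_add_sq_mul_pow_three hu hv huv) ?_
  simpa using congrArg (expand 2 two_ne_zero) hU

theorem knuthT_mul_knuthTneg : knuthT * knuthTneg = expand 2 two_ne_zero (gouldSeries 3 2) := by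
  have hT : knuthT = gouldSeries (3 / 2) (1 / 2) ^ 2 := by
    rw [knuthT_eq_gouldSeries, gouldSeries_pow]
    norm_num
  rw [knuthTneg_eq_rescale, hT, map_pow, ← mul_pow, gouldSeries_half_mul_rescale_neg_one,
    ← map_pow, gouldSeries_pow]
  norm_num

/-- Knuth's identity
`T(z)·T(−z) = Σ_{n≥0} (1/(n+1))·C(3n+1,n)·z^{2n}`. -/
theorem knuth_half_tree_identity :
    (∀ n : ℕ, PowerSeries.coeff (2 * n) (knuthT * knuthTneg) =
        ((3 * n + 1).choose n : ℚ) / (n + 1)) ∧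
    (∀ n : ℕ, PowerSeries.coeff (2 * n + 1) (knuthT * knuthTneg) = 0) := by
  rw [knuthT_mul_knuthTneg]
  refine ⟨fun n => ?_, fun n => ?_⟩
  · rw [coeff_expand_mul, coeff_gouldSeries, gould_three_two]
  · exact coeff_expand_of_not_dvd _ _ _ (by omega)
end

section
/- Let u_1(z), u_2(z) be the two small roots (Puiseux series vanishing at z=0) of the kernel equation 1 − z(u^{−2}+u^5) = 0, i.e., u^2 = z(1 + u^7). Then the generating function F_0(z) for walks with steps {−2,+5} on ℕ from altitude 3 to altitude 0 equals −u_1 u_2 (u_1^4 − u_2^4)/(z(u_1 − u_2)), and the generating function G_1(z) for such walks from altitude 4 to altitude 1 equals (u_1^6 − u_2^6)/(z(u_1 − u_2)). -/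
open PowerSeries

/-- `walkCount h n k` = number of walks of length `n` on `ℕ` with steps `−2, +5`,
starting at altitude `h`, staying nonnegative, and ending at altitude `k`. -/
noncomputable def walkCount (h : ℕ) (n : ℕ) (k : ℤ) : ℕ :=
  Nat.card {w : List ℤ //
    w.length = n ∧ (∀ s ∈ w, s = -2 ∨ s = 5) ∧
    (∀ m : ℕ, 0 ≤ (h : ℤ) + (w.take m).sum) ∧ (h : ℤ) + w.sum = k}

/-- A generating function `Σ_n c_n z^n`, rewritten as a power series in `x` where
`z = x²` (the small roots of the kernel are power series in `x = √z`). -/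
noncomputable def liftSqrt (c : ℕ → ℕ) : PowerSeries ℚ :=
  PowerSeries.mk fun m => if m % 2 = 0 then (c (m / 2) : ℚ) else 0

/-!
Kernel method. For a fixed start `h`, let `F k` be the generating function of walks ending at
altitude `k`, written in `x` with `z = x²`. Splitting off the last step gives
`F k = [k = h] + z (F (k + 2) + F (k - 5))`, i.e. for `F(u) = ∑ F k uᵏ`,
`u² F(u) = u^(h+2) + z (F(u) - F 0 - F 1 u) + z u⁷ F(u)`.
For a small root `u` of `u² = z (1 + u⁷)` the terms in `F(u)` cancel, leaving
`z (F 0 + F 1 u) = u^(h+2)`; since `x ∣ u` this is checked on partial sums, whose tails are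
divisible by arbitrarily high powers of `x`. The two small roots give a `2 × 2` linear system in
`F 0, F 1`, solved by Cramer's rule: `h = 3` yields `F₀` and `h = 4` yields `G₁`.
-/

namespace PowerSeries

variable {R : Type*} [CommRing R]

theorem eq_zero_of_forall_X_pow_dvd {f : R⟦X⟧} (hf : ∀ n : ℕ, X ^ n ∣ f) : f = 0 := by
  ext m
  exact X_pow_dvd_iff.1 (hf (m + 1)) m (Nat.lt_succ_self m)

end PowerSeries

section KernelMethod

variable {R : Type*} [CommRing R] (F : ℤ → R⟦X⟧) (u : R⟦X⟧)

noncomputable def partialEval (N : ℕ) : R⟦X⟧ :=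
  ∑ k ∈ Finset.range N, F k * u ^ k

theorem pow_dvd_partialEval_add_sub (N j : ℕ) :
    u ^ N ∣ partialEval F u (N + j) - partialEval F u N := by
  rw [partialEval, partialEval, Finset.sum_range_add, add_sub_cancel_left]
  exact Finset.dvd_sum fun i _ => ⟨F (N + i : ℕ) * u ^ i, by ring⟩

variable {F} {h : ℕ} {z : R⟦X⟧}

theorem sq_mul_partialEval (hneg : ∀ k < 0, F k = 0)
    (hrec : ∀ k : ℕ, F k = (if k = h then 1 else 0) + z * (F (k + 2) + F (k - 5)))
    {N : ℕ} (hN : h < N + 5) :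
    u ^ 2 * partialEval F u (N + 5) = u ^ (h + 2)
      + z * (partialEval F u (N + 7) - F 0 - F 1 * u) + z * u ^ 7 * partialEval F u N := by
  have hsource : ∑ k ∈ Finset.range (N + 5), (if k = h then 1 else 0) * u ^ (k + 2)
      = u ^ (h + 2) := by
    simp [Finset.sum_ite_eq', hN]
  have hup : ∑ k ∈ Finset.range (N + 5), F (k + 2) * u ^ (k + 2)
      = partialEval F u (N + 7) - F 0 - F 1 * u := by
    rw [partialEval, Finset.sum_range_succ' _ (N + 6), Finset.sum_range_succ' _ (N + 5)]
    simp only [Nat.cast_add, Nat.cast_one, Nat.cast_zero, Nat.cast_ofNat, add_assoc,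
      one_add_one_eq_two, zero_add, pow_zero, pow_one, mul_one]
    ring
  have hdown : ∑ k ∈ Finset.range (N + 5), F (k - 5) * u ^ (k + 2)
      = u ^ 7 * partialEval F u N := by
    rw [add_comm N, Finset.sum_range_add, partialEval, Finset.mul_sum,
      Finset.sum_eq_zero fun k hk => by
        rw [hneg _ (by simp at hk; omega), zero_mul]]
    push_cast
    refine (zero_add _).trans (Finset.sum_congr rfl fun k _ => ?_)
    ring_nf
  calc u ^ 2 * partialEval F u (N + 5)
      = ∑ k ∈ Finset.range (N + 5), ((if k = h then 1 else 0) * u ^ (k + 2)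
          + z * (F (k + 2) * u ^ (k + 2)) + z * (F (k - 5) * u ^ (k + 2))) := by
        rw [partialEval, Finset.mul_sum]
        refine Finset.sum_congr rfl fun k _ => ?_
        rw [hrec k]
        ring
    _ = _ := by
        rw [Finset.sum_add_distrib, Finset.sum_add_distrib, ← Finset.mul_sum, ← Finset.mul_sum,
          hsource, hup, hdown]
        ring

theorem kernel_root_eq (hneg : ∀ k < 0, F k = 0)
    (hrec : ∀ k : ℕ, F k = (if k = h then 1 else 0) + z * (F (k + 2) + F (k - 5)))
    (hu0 : constantCoeff u = 0) (hu : u ^ 2 = z * (1 + u ^ 7)) :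
    z * (F 0 + F 1 * u) = u ^ (h + 2) := by
  rw [← sub_eq_zero]
  refine PowerSeries.eq_zero_of_forall_X_pow_dvd fun n => ?_
  have hX : X ^ n ∣ u ^ (n + h) :=
    (pow_dvd_pow_of_dvd (X_dvd_iff.2 hu0) n).trans (pow_dvd_pow u (by omega))
  have key : z * (F 0 + F 1 * u) - u ^ (h + 2)
      = z * (partialEval F u (n + h + 5 + 2) - partialEval F u (n + h + 5))
        - z * u ^ 7 * (partialEval F u (n + h + 5) - partialEval F u (n + h)) := by
    linear_combination (sq_mul_partialEval u hneg hrec (N := n + h) (by omega))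
      - partialEval F u (n + h + 5) * hu
  rw [key]
  exact dvd_sub
    (dvd_mul_of_dvd_right (hX.trans ((pow_dvd_pow u (by omega)).trans
      (pow_dvd_partialEval_add_sub F u _ _))) _)
    (dvd_mul_of_dvd_right (hX.trans (pow_dvd_partialEval_add_sub F u _ _)) _)

end KernelMethod

theorem two_roots_cramer {R : Type*} [CommRing R] {z a b u₁ u₂ : R} (n : ℕ)
    (h₁ : z * (a + b * u₁) = u₁ ^ (n + 1)) (h₂ : z * (a + b * u₂) = u₂ ^ (n + 1)) :
    z * (u₁ - u₂) * a = -(u₁ * u₂ * (u₁ ^ n - u₂ ^ n)) ∧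
      z * (u₁ - u₂) * b = u₁ ^ (n + 1) - u₂ ^ (n + 1) :=
  ⟨by linear_combination u₁ * h₂ - u₂ * h₁, by linear_combination h₁ - h₂⟩

-- An `abbrev`, so that instances on `{w // IsWalk h n k w}` apply to `walkCount`.
abbrev IsWalk (h n : ℕ) (k : ℤ) (w : List ℤ) : Prop :=
  w.length = n ∧ (∀ s ∈ w, s = -2 ∨ s = 5) ∧
    (∀ m : ℕ, 0 ≤ (h : ℤ) + (w.take m).sum) ∧ (h : ℤ) + w.sum = k

instance (h n : ℕ) (k : ℤ) : Finite {w : List ℤ // IsWalk h n k w} := by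
  refine Set.Finite.to_subtype (((List.finite_length_eq ({-2, 5} : Set ℤ) n).image
    (List.map Subtype.val)).subset ?_)
  rintro w ⟨hlen, hsteps, -, -⟩
  lift w to List ({-2, 5} : Set ℤ) using (by simpa using hsteps)
  exact ⟨w, by simpa using hlen, rfl⟩

theorem walkCount_zero (h : ℕ) (k : ℤ) : walkCount h 0 k = if k = h then 1 else 0 := by
  have hnil (w : List ℤ) : IsWalk h 0 k w ↔ w = [] ∧ k = h := by
    constructor
    · rintro ⟨hlen, -, -, hend⟩
      rw [List.length_eq_zero_iff] at hlen
      subst hlen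
      simpa [eq_comm] using hend
    · rintro ⟨rfl, rfl⟩
      exact ⟨rfl, by simp, by simp, by simp⟩
  split_ifs with hk
  · exact Nat.card_eq_one_iff_exists.2 ⟨⟨[], (hnil []).2 ⟨rfl, hk⟩⟩,
      fun w => Subtype.ext ((hnil w.1).1 w.2).1⟩
  · have : IsEmpty {w // IsWalk h 0 k w} := ⟨fun w => hk ((hnil w.1).1 w.2).2⟩
    exact Nat.card_of_isEmpty

theorem walkCount_of_neg (h n : ℕ) {k : ℤ} (hk : k < 0) : walkCount h n k = 0 := by
  have : IsEmpty {w // IsWalk h n k w} := ⟨fun ⟨w, _, _, hpre, hend⟩ => by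
    have := hpre w.length
    rw [List.take_length] at this
    omega⟩
  exact Nat.card_of_isEmpty

theorem isWalk_append_singleton_iff {h n : ℕ} {k s : ℤ} (hk : 0 ≤ k) {w : List ℤ} :
    IsWalk h (n + 1) k (w ++ [s]) ↔ IsWalk h n (k - s) w ∧ (s = -2 ∨ s = 5) := by
  constructor
  · rintro ⟨hlen, hsteps, hpre, hend⟩
    refine ⟨⟨by simpa using hlen, fun t ht => hsteps t (by simp [ht]), fun m => ?_,
      by simp at hend; omega⟩, hsteps s (by simp)⟩
    have := hpre (min m w.length)
    rwa [List.take_append_of_le_length (min_le_right _ _), ← List.take_take,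
      List.take_length] at this
  · rintro ⟨⟨hlen, hsteps, hpre, hend⟩, hs⟩
    refine ⟨by simp [hlen], ?_, fun m => ?_, by simp; omega⟩
    · simpa [or_imp, forall_and] using ⟨hsteps, hs⟩
    · rcases le_or_gt m n with hm | hm
      · simpa [List.take_append_of_le_length (hlen ▸ hm)] using hpre m
      · rw [List.take_of_length_le (by simp [hlen]; omega)]
        simp
        omega

noncomputable def appendStepEquiv (h n : ℕ) {k : ℤ} (hk : 0 ≤ k) :
    {w // IsWalk h n (k + 2) w} ⊕ {w // IsWalk h n (k - 5) w} ≃ {w // IsWalk h (n + 1) k w} :=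
  Equiv.ofBijective
    (Sum.elim
      (fun w => ⟨w.1 ++ [-2], (isWalk_append_singleton_iff hk).2 ⟨by simpa using w.2, by simp⟩⟩)
      (fun w => ⟨w.1 ++ [5], (isWalk_append_singleton_iff hk).2 ⟨w.2, by simp⟩⟩))
    ⟨by
      rintro (⟨w₁, _⟩ | ⟨w₁, _⟩) (⟨w₂, _⟩ | ⟨w₂, _⟩) he <;> simp at he <;> simp [he],
    by
      rintro ⟨w, hw⟩
      obtain rfl | ⟨w, s, rfl⟩ := w.eq_nil_or_concat'
      · exact absurd hw.1 (by simp)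
      obtain ⟨hw, rfl | rfl⟩ := (isWalk_append_singleton_iff hk).1 hw
      · exact ⟨Sum.inl ⟨w, by simpa using hw⟩, rfl⟩
      · exact ⟨Sum.inr ⟨w, hw⟩, rfl⟩⟩

theorem walkCount_succ (h n : ℕ) {k : ℤ} (hk : 0 ≤ k) :
    walkCount h (n + 1) k = walkCount h n (k + 2) + walkCount h n (k - 5) :=
  (Nat.card_congr (appendStepEquiv h n hk).symm).trans Nat.card_sum

theorem liftSqrt_add (c d : ℕ → ℕ) :
    liftSqrt (fun n => c n + d n) = liftSqrt c + liftSqrt d := by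
  ext m
  simp only [liftSqrt, coeff_mk, map_add]
  split_ifs <;> simp

theorem liftSqrt_eq_add_X_sq_mul (c : ℕ → ℕ) :
    liftSqrt c = C (c 0 : ℚ) + X ^ 2 * liftSqrt (fun n => c (n + 1)) := by
  ext m
  rcases m with _ | _ | m
  · simp [liftSqrt]
  · simp [liftSqrt, coeff_X_pow_mul', -map_natCast]
  · have hmod : (m + 2) % 2 = m % 2 := Nat.add_mod_right m 2
    have hdiv : (m + 2) / 2 = m / 2 + 1 := Nat.add_div_right m two_pos
    simp [liftSqrt, coeff_X_pow_mul', -map_natCast, hmod, hdiv]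

noncomputable def walkGF (h : ℕ) (k : ℤ) : ℚ⟦X⟧ :=
  liftSqrt fun n => walkCount h n k

theorem walkGF_of_neg (h : ℕ) {k : ℤ} (hk : k < 0) : walkGF h k = 0 := by
  ext m
  simp [walkGF, liftSqrt, walkCount_of_neg h _ hk]

theorem walkGF_eq (h k : ℕ) :
    walkGF h k = (if k = h then 1 else 0) + X ^ 2 * (walkGF h (k + 2) + walkGF h (k - 5)) := by
  simp only [walkGF]
  rw [liftSqrt_eq_add_X_sq_mul, walkCount_zero]
  simp only [walkCount_succ h _ (Int.natCast_nonneg k), liftSqrt_add, Nat.cast_inj]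
  split_ifs <;> simp

theorem small_roots_closed_form_general (u₁ u₂ : PowerSeries ℚ)
    (h₁0 : PowerSeries.constantCoeff u₁ = 0) (h₂0 : PowerSeries.constantCoeff u₂ = 0)
    (h₁ : u₁ ^ 2 = PowerSeries.X ^ 2 * (1 + u₁ ^ 7))
    (h₂ : u₂ ^ 2 = PowerSeries.X ^ 2 * (1 + u₂ ^ 7)) :
    PowerSeries.X ^ 2 * (u₁ - u₂) * liftSqrt (fun n => walkCount 3 n 0) =
        -(u₁ * u₂ * (u₁ ^ 4 - u₂ ^ 4)) ∧
    PowerSeries.X ^ 2 * (u₁ - u₂) * liftSqrt (fun n => walkCount 4 n 1) =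
        u₁ ^ 6 - u₂ ^ 6 := by
  have root (h : ℕ) {u : ℚ⟦X⟧} (hu0 : constantCoeff u = 0) (hu : u ^ 2 = X ^ 2 * (1 + u ^ 7)) :
      X ^ 2 * (walkGF h 0 + walkGF h 1 * u) = u ^ (h + 2) :=
    kernel_root_eq u (fun _ => walkGF_of_neg h) (walkGF_eq h) hu0 hu
  exact ⟨(two_roots_cramer 4 (root 3 h₁0 h₁) (root 3 h₂0 h₂)).1,
    (two_roots_cramer 5 (root 4 h₁0 h₁) (root 4 h₂0 h₂)).2⟩

/-- with `u₁, u₂` the two small roots of the kernel equation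
`u² = z(1+u⁷)` (as power series in `x = √z`, vanishing at 0), the generating function
`F₀` of walks with steps `{−2,+5}` on `ℕ` from altitude 3 to altitude 0 satisfies
`F₀(z) = −u₁u₂(u₁⁴−u₂⁴)/(z(u₁−u₂))`, and the one `G₁` from altitude 4 to altitude 1
satisfies `G₁(z) = (u₁⁶−u₂⁶)/(z(u₁−u₂))` (stated with cleared denominators). -/
theorem small_roots_closed_form (u₁ u₂ : PowerSeries ℚ)
    (h₁0 : PowerSeries.constantCoeff u₁ = 0) (h₂0 : PowerSeries.constantCoeff u₂ = 0)
    (h₁ : u₁ ^ 2 = PowerSeries.X ^ 2 * (1 + u₁ ^ 7))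
    (h₂ : u₂ ^ 2 = PowerSeries.X ^ 2 * (1 + u₂ ^ 7))
    (hne : u₁ ≠ u₂) :
    PowerSeries.X ^ 2 * (u₁ - u₂) * liftSqrt (fun n => walkCount 3 n 0) =
        -(u₁ * u₂ * (u₁ ^ 4 - u₂ ^ 4)) ∧
    PowerSeries.X ^ 2 * (u₁ - u₂) * liftSqrt (fun n => walkCount 4 n 1) =
        u₁ ^ 6 - u₂ ^ 6 :=
  small_roots_closed_form_general u₁ u₂ h₁0 h₂0 h₁ h₂
end

section
/- With A_n, B_n as above and u_1, u_2 the two small roots of u^2 = z(1+u^7), one has A_n + B_n = [z^{7n−1}](u_1(z)^5 + u_2(z)^5), i.e., the sum u_1^5+u_2^5 is a power series in z whose coefficient of z^{7n−1} equals A_n+B_n. -/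
open PowerSeries

/-- `knuthA n` = number of North/East lattice paths from `(0,0)` to `(5n−1, 2n−1)`
staying weakly below `y = (2/5)x + 1/5` (`5y ≤ 2x + 1` at every vertex). -/
noncomputable def knuthA (n : ℕ) : ℕ :=
  Nat.card {l : List (ℕ × ℕ) //
    (∀ s ∈ l, s = (1, 0) ∨ s = (0, 1)) ∧
    l.sum = (5 * n - 1, 2 * n - 1) ∧
    ∀ k ≤ l.length, 5 * ((l.take k).sum).2 ≤ 2 * ((l.take k).sum).1 + 1}

/-- `knuthB n` = number of such paths staying weakly below `y = (2/5)x`. -/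
noncomputable def knuthB (n : ℕ) : ℕ :=
  Nat.card {l : List (ℕ × ℕ) //
    (∀ s ∈ l, s = (1, 0) ∨ s = (0, 1)) ∧
    l.sum = (5 * n - 1, 2 * n - 1) ∧
    ∀ k ≤ l.length, 5 * ((l.take k).sum).2 ≤ 2 * ((l.take k).sum).1}

/-
Read backwards, a lattice path staying weakly below `5y = 2x + c` is a walk of the height
`2x - 5y + c` with steps `+5` and `-2` that stays nonnegative; `A_n` and `B_n` count such walks of
`7n - 2` steps from height `4` to `1` and from `3` to `0`. If `F_{a,b}(z)` counts walks from `a`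
to `b`, the last-step recursion `F_{a,b} = [a = b] + z (F_{a,b-5} + F_{a,b+2})` gives the kernel
equation
  `(u² - z (1 + u⁷)) ∑_b F_{a,b} u^b = u^(a+2) - z (F_{a,0} + F_{a,1} u)`,
so each small root of the kernel satisfies `u^(a+2) = z (F_{a,0} + F_{a,1} u)`. Taking `a = 3, 4`
for both roots and cancelling `u₁ - u₂` leaves `u₁⁵ + u₂⁵ = z (F_{3,0} + F_{4,1})`.
-/

section KernelMethod

open scoped PowerSeries.WithPiTopology

theorem summable_mul_pow_of_constantCoeff_eq_zero {R : Type*} [CommSemiring R]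
    [TopologicalSpace R] (G : ℕ → R⟦X⟧) {u : R⟦X⟧} (hu : constantCoeff u = 0) :
    Summable fun b => G b * u ^ b := by
  obtain ⟨v, rfl⟩ := X_dvd_iff.mpr hu
  refine (WithPiTopology.summable_iff_summable_coeff _).mpr fun M =>
    summable_of_hasFiniteSupport ((Set.finite_Iic M).subset fun b hb => ?_)
  by_contra hbM
  rw [Function.mem_support, mul_pow, mul_left_comm, coeff_X_pow_mul',
    if_neg (by simpa using hbM)] at hb
  exact hb rfl

theorem pow_add_eq_of_kernel {R : Type*} [CommRing R] {p q a : ℕ} {F : ℕ → R⟦X⟧}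
    {t u : R⟦X⟧}
    (hF : ∀ b, F b = (if b = a then 1 else 0) +
      t * ((if p ≤ b then F (b - p) else 0) + F (b + q)))
    (hu0 : constantCoeff u = 0) (hu : u ^ q = t * (1 + u ^ (p + q))) :
    u ^ (a + q) = t * ∑ b ∈ Finset.range q, F b * u ^ b := by
  -- Any topology on `R` would do: `∑ b, F b * u ^ b` converges coefficientwise in `R⟦X⟧`
  -- because `u ^ b` has order at least `b`.
  let _ : TopologicalSpace R := ⊥
  have : DiscreteTopology R := ⟨rfl⟩
  obtain ⟨S, hS⟩ := summable_mul_pow_of_constantCoeff_eq_zero F hu0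
  have hstart : HasSum (fun b => if b = a then u ^ (a + q) else 0) (u ^ (a + q)) :=
    hasSum_ite_eq a _
  have hup : HasSum (fun b => t * (if p ≤ b then F (b - p) else 0) * u ^ (b + q))
      (t * u ^ (p + q) * S) := by
    rw [← hasSum_nat_add_iff' p, sub_eq_self.mpr (Finset.sum_eq_zero fun b hb => by
      rw [if_neg (by simpa using hb), mul_zero, zero_mul])]
    refine (hS.mul_left (t * u ^ (p + q))).congr_fun fun b => ?_
    rw [if_pos (Nat.le_add_left p b), Nat.add_sub_cancel]
    ring
  have hdown : HasSum (fun b => t * F (b + q) * u ^ (b + q))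
      (t * (S - ∑ b ∈ Finset.range q, F b * u ^ b)) := by
    simpa only [mul_assoc] using ((hasSum_nat_add_iff' q).mpr hS).mul_left t
  have hkernel : HasSum (fun b => F b * u ^ (b + q)) (u ^ q * S) :=
    (hS.mul_left (u ^ q)).congr_fun fun b => by ring
  have hsplit : HasSum (fun b => F b * u ^ (b + q))
      (u ^ (a + q) + t * u ^ (p + q) * S + t * (S - ∑ b ∈ Finset.range q, F b * u ^ b)) :=
    ((hstart.add hup).add hdown).congr_fun fun b => by
      rw [hF b]
      split_ifs with hb <;> (try subst hb) <;> ring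
  linear_combination S * hu - hkernel.unique hsplit

end KernelMethod

theorem pow_add_pow_eq_of_pow_eq_linear {R : Type*} [CommRing R] [NoZeroDivisors R]
    {u₁ u₂ c₀ c₁ d₀ d₁ : R} {k : ℕ} (hne : u₁ ≠ u₂)
    (h₁ : u₁ ^ k = c₀ + c₁ * u₁) (h₂ : u₂ ^ k = c₀ + c₁ * u₂)
    (h₁' : u₁ ^ (k + 1) = d₀ + d₁ * u₁) (h₂' : u₂ ^ (k + 1) = d₀ + d₁ * u₂) :
    u₁ ^ k + u₂ ^ k = c₀ + d₁ := by
  have hprod : (u₁ - u₂) * (c₀ + c₁ * (u₁ + u₂) - d₁) = 0 := by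
    linear_combination h₁' - u₁ * h₁ - h₂' + u₂ * h₂
  have hd₁ := (mul_eq_zero.mp hprod).resolve_left (sub_ne_zero.mpr hne)
  linear_combination h₁ + h₂ + hd₁

namespace LatticePath

/-- Paths of `N` unit steps from the origin, weakly below `p y = q x + c` and ending on
`p y = q x + c - a`. Read backwards, the height `q x - p y + c` along such a path is a nonnegative
walk from `a` to `c` with steps `+p` and `-q`. -/
def IsPath (p q a c N : ℕ) (l : List (ℕ × ℕ)) : Prop :=
  (∀ s ∈ l, s = (1, 0) ∨ s = (0, 1)) ∧ l.length = N ∧ q * l.sum.1 + c = p * l.sum.2 + a ∧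
    ∀ k ≤ l.length, p * (l.take k).sum.2 ≤ q * (l.take k).sum.1 + c

noncomputable def count (p q a c N : ℕ) : ℕ :=
  Nat.card {l // IsPath p q a c N l}

variable {p q a c N : ℕ}

theorem isPath_zero_iff {l : List (ℕ × ℕ)} : IsPath p q a c 0 l ↔ l = [] ∧ c = a := by
  constructor
  · rintro ⟨-, hl, hend, -⟩
    obtain rfl := List.length_eq_zero_iff.mp hl
    simpa using hend
  · rintro ⟨rfl, rfl⟩
    simp [IsPath]

theorem isPath_cons_iff {s : ℕ × ℕ} {t : List (ℕ × ℕ)} :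
    IsPath p q a c (N + 1) (s :: t) ↔ (s = (1, 0) ∨ s = (0, 1)) ∧
      (∀ x ∈ t, x = (1, 0) ∨ x = (0, 1)) ∧ t.length = N ∧
      q * (s.1 + t.sum.1) + c = p * (s.2 + t.sum.2) + a ∧
      ∀ k ≤ t.length, p * (s.2 + (t.take k).sum.2) ≤ q * (s.1 + (t.take k).sum.1) + c := by
  simp only [IsPath, List.mem_cons, forall_eq_or_imp, List.length_cons, Nat.add_right_cancel_iff,
    List.sum_cons, Prod.fst_add, Prod.snd_add]
  constructor
  · rintro ⟨⟨hs, ht⟩, hl, hend, hk⟩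
    exact ⟨hs, ht, hl, hend, fun k hk' => by simpa using hk (k + 1) (by omega)⟩
  · rintro ⟨hs, ht, hl, hend, hk⟩
    refine ⟨⟨hs, ht⟩, hl, hend, ?_⟩
    rintro (_ | k) hk'
    · simp
    · simpa using hk k (by omega)

theorem isPath_east_cons_iff {t : List (ℕ × ℕ)} :
    IsPath p q a c (N + 1) ((1, 0) :: t) ↔ IsPath p q a (c + q) N t := by
  rw [isPath_cons_iff, IsPath]
  simp only [true_or, true_and, mul_add, zero_add, mul_one]
  constructor <;> rintro ⟨ht, hl, hend, hk⟩ <;>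
    exact ⟨ht, hl, by omega, fun k hk' => by have := hk k hk'; omega⟩

theorem isPath_north_cons_iff {t : List (ℕ × ℕ)} :
    IsPath p q a c (N + 1) ((0, 1) :: t) ↔ p ≤ c ∧ IsPath p q a (c - p) N t := by
  rw [isPath_cons_iff, IsPath]
  simp only [or_true, true_and, mul_add, zero_add, mul_one]
  constructor
  · rintro ⟨ht, hl, hend, hk⟩
    have hc : p ≤ c := by simpa using hk 0 (Nat.zero_le _)
    exact ⟨hc, ht, hl, by omega, fun k hk' => by have := hk k hk'; omega⟩
  · rintro ⟨hc, ht, hl, hend, hk⟩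
    exact ⟨ht, hl, by omega, fun k hk' => by have := hk k hk'; omega⟩

theorem finite_setOf_isPath : {l | IsPath p q a c N l}.Finite := by
  refine ((List.finite_length_eq Bool N).image
    (List.map fun b => if b then (1, 0) else (0, 1))).subset fun l hl => ?_
  refine ⟨l.map (· = (1, 0)), by simpa using hl.2.1, ?_⟩
  conv_rhs => rw [← List.map_id l]
  rw [List.map_map]
  exact List.map_congr_left fun s hs => by rcases hl.1 s hs with rfl | rfl <;> simp

instance : Finite {l // IsPath p q a c N l} := finite_setOf_isPath.to_subtype

theorem count_zero : count p q a c 0 = if c = a then 1 else 0 := by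
  simp_rw [count, isPath_zero_iff]
  split_ifs with h <;> simp [h]

noncomputable def consEquiv :
    {t // p ≤ c ∧ IsPath p q a (c - p) N t} ⊕ {t // IsPath p q a (c + q) N t} ≃
      {l // IsPath p q a c (N + 1) l} :=
  Equiv.ofBijective
    (Sum.elim (fun t => ⟨(0, 1) :: t.1, isPath_north_cons_iff.mpr t.2⟩)
      fun t => ⟨(1, 0) :: t.1, isPath_east_cons_iff.mpr t.2⟩) <| by
    constructor
    · rintro (⟨t, ht⟩ | ⟨t, ht⟩) (⟨t', ht'⟩ | ⟨t', ht'⟩) h <;> simp_all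
    · rintro ⟨_ | ⟨s, t⟩, hl⟩
      · simp [IsPath] at hl
      · rcases hl.1 s List.mem_cons_self with rfl | rfl
        · exact ⟨.inr ⟨t, isPath_east_cons_iff.mp hl⟩, rfl⟩
        · exact ⟨.inl ⟨t, isPath_north_cons_iff.mp hl⟩, rfl⟩

theorem count_succ :
    count p q a c (N + 1) =
      (if p ≤ c then count p q a (c - p) N else 0) + count p q a (c + q) N := by
  have : Finite {t // p ≤ c ∧ IsPath p q a (c - p) N t} :=
    (finite_setOf_isPath.subset fun _ ht => ht.2).to_subtype
  rw [count, ← Nat.card_congr consEquiv, Nat.card_sum]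
  split_ifs with hc <;> simp [hc, count]

theorem length_eq_sum_fst_add_sum_snd {l : List (ℕ × ℕ)}
    (hl : ∀ s ∈ l, s = (1, 0) ∨ s = (0, 1)) : l.length = l.sum.1 + l.sum.2 := by
  induction l with
  | nil => rfl
  | cons s t ih =>
    have ht := ih fun x hx => hl x (List.mem_cons_of_mem s hx)
    rcases hl s List.mem_cons_self with rfl | rfl <;> simp [ht] <;> omega

theorem card_eq_count (hpq : 0 < p + q) {e m : ℕ} (h : p * m ≤ q * e + c) :
    Nat.card {l : List (ℕ × ℕ) // (∀ s ∈ l, s = (1, 0) ∨ s = (0, 1)) ∧ l.sum = (e, m) ∧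
      ∀ k ≤ l.length, p * (l.take k).sum.2 ≤ q * (l.take k).sum.1 + c} =
      count p q (q * e + c - p * m) c (e + m) := by
  refine Nat.card_congr (Equiv.subtypeEquivRight fun l => ⟨?_, ?_⟩)
  · rintro ⟨hu, hs, hb⟩
    exact ⟨hu, by rw [length_eq_sum_fst_add_sum_snd hu, hs], by simp only [hs]; omega, hb⟩
  · rintro ⟨hu, hl, hend, hb⟩
    rw [length_eq_sum_fst_add_sum_snd hu] at hl
    have hmul : (p + q) * l.sum.1 = (p + q) * e := by
      zify [h] at hl hend ⊢
      linear_combination hend + p * hl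
    have hx := Nat.eq_of_mul_eq_mul_left hpq hmul
    exact ⟨hu, Prod.ext hx (by omega), hb⟩

noncomputable def series (R : Type*) [Semiring R] (p q a c : ℕ) : R⟦X⟧ :=
  mk fun N => (count p q a c N : R)

theorem series_eq (R : Type*) [Semiring R] : series R p q a c = (if c = a then 1 else 0) +
    X * ((if p ≤ c then series R p q a (c - p) else 0) + series R p q a (c + q)) := by
  ext (_ | N)
  · simp [series, count_zero]
  · simp only [series, coeff_mk, count_succ, map_add, coeff_succ_X_mul]
    split_ifs <;> simp [coeff_one]

theorem pow_add_eq_X_sq_mul_sum_series {R : Type*} [CommRing R] {p q : ℕ} {u : R⟦X⟧}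
    (hu0 : constantCoeff u = 0) (hu : u ^ q = X ^ 2 * (1 + u ^ (p + q))) (a : ℕ) :
    u ^ (a + q) = X ^ 2 * ∑ b ∈ Finset.range q, expand 2 two_ne_zero (series R p q a b) * u ^ b :=
  pow_add_eq_of_kernel (fun b => by
    conv_lhs => rw [series_eq]
    simp only [map_add, map_mul, expand_X, apply_ite (expand 2 two_ne_zero), map_one, map_zero])
    hu0 hu

theorem knuthA_eq_count {n : ℕ} (hn : 1 ≤ n) : knuthA n = count 5 2 4 1 (7 * n - 2) :=
  (card_eq_count (by norm_num) (by omega : 5 * (2 * n - 1) ≤ 2 * (5 * n - 1) + 1)).trans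
    (by congr 1 <;> omega)

theorem knuthB_eq_count {n : ℕ} (hn : 1 ≤ n) : knuthB n = count 5 2 3 0 (7 * n - 2) :=
  (card_eq_count (by norm_num) (by omega : 5 * (2 * n - 1) ≤ 2 * (5 * n - 1) + 0)).trans
    (by congr 1 <;> omega)

end LatticePath

open LatticePath in
/-- The roots are series in `x = √z`, so `[z^(7n−1)]` is the coefficient of `x^(2(7n−1))`. -/
theorem knuth_A_plus_B_coeff (u₁ u₂ : PowerSeries ℚ)
    (h₁0 : PowerSeries.constantCoeff u₁ = 0) (h₂0 : PowerSeries.constantCoeff u₂ = 0)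
    (h₁ : u₁ ^ 2 = PowerSeries.X ^ 2 * (1 + u₁ ^ 7))
    (h₂ : u₂ ^ 2 = PowerSeries.X ^ 2 * (1 + u₂ ^ 7))
    (hne : u₁ ≠ u₂) (n : ℕ) (hn : 1 ≤ n) :
    (knuthA n + knuthB n : ℚ) =
      PowerSeries.coeff (2 * (7 * n - 1)) (u₁ ^ 5 + u₂ ^ 5) := by
  set G : ℕ → ℕ → ℚ⟦X⟧ := fun a b => expand 2 two_ne_zero (series ℚ 5 2 a b)
  have hroot : ∀ u : ℚ⟦X⟧, constantCoeff u = 0 → u ^ 2 = X ^ 2 * (1 + u ^ 7) → ∀ a,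
      u ^ (a + 2) = X ^ 2 * G a 0 + X ^ 2 * G a 1 * u := fun u hu0 hu a => by
    rw [pow_add_eq_X_sq_mul_sum_series (p := 5) hu0 hu a]
    simp only [Finset.sum_range_succ, Finset.range_one, Finset.sum_singleton, pow_zero, mul_one,
      pow_one, G]
    ring
  have hsum : u₁ ^ 5 + u₂ ^ 5 = X ^ 2 * G 3 0 + X ^ 2 * G 4 1 :=
    pow_add_pow_eq_of_pow_eq_linear hne (hroot u₁ h₁0 h₁ 3) (hroot u₂ h₂0 h₂ 3)
      (hroot u₁ h₁0 h₁ 4) (hroot u₂ h₂0 h₂ 4)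
  rw [hsum, ← mul_add, coeff_X_pow_mul', if_pos (by omega),
    show 2 * (7 * n - 1) - 2 = 2 * (7 * n - 2) by omega, map_add, coeff_expand_mul,
    coeff_expand_mul, series, series, coeff_mk, coeff_mk, knuthA_eq_count hn, knuthB_eq_count hn,
    add_comm]
end

section
/- Rotation law for slope 2/5: let ω = e^{2πi/7} and let u_1(z), u_2(z) be the two small roots of u^2 = z(1+u^7), analytic on the slit disk |z| ≤ ρ, 0 < arg z < π − 2π/7 (ρ the positive dominant singularity). Then u_1(ωz) = ω^{−3} u_2(z) and u_2(ωz) = ω^{−3} u_1(z) on this domain. -/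
open Complex Real

/-- The structural radius `ρ = (2²·5⁵)^{1/7}/7`. -/
noncomputable def structRho : ℝ := (2 ^ 2 * 5 ^ 5 : ℝ) ^ ((1 : ℝ) / 7) / 7

/-- `ω = e^{2πi/7}`. -/
noncomputable def omega7 : ℂ := Complex.exp (2 * Real.pi * Complex.I / 7)

/-- The slit disk of radius `ρ` on which the two small branches are defined:
`|z| ≤ ρ` minus the cut along the nonpositive real axis. -/
noncomputable def slitDisk : Set ℂ :=
  {z : ℂ | ‖z‖ ≤ structRho ∧ (z.im ≠ 0 ∨ 0 ≤ z.re)}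

/-!
Since `ω⁷ = 1`, `z ↦ ω³ u(ωz)` is again a root of `u² = z(1 + u⁷)` whenever `u` is one, and the
kernel has no double root for `0 < |z| < ρ`. Two continuous root branches on a connected open set
free of double roots agree everywhere once they agree at one point, so it suffices to
compare `ω³ u₁(ωz)` with `u₂(z)` at a single small `z = δ² > 0`, and then to reach `|z| = ρ` by
continuity.
Near `0` a small root satisfies `u(w²) ≈ w` or `u(w²) ≈ -w` on the half-plane `re w > 0`, the sign
being constant by connectedness. With `η = e^{iπ/7}` one has `ω = η²` and `ω³η = -1`, hence
`ω³ u₁(ωδ²) ≈ ω³ηδ = -δ ≈ u₂(δ²)`, and two small roots that close together must coincide.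
-/

open Set Filter Topology

theorem kernel_roots_sub_mul_eq_zero {z a b : ℂ} (ha : a ^ 2 = z * (1 + a ^ 7))
    (hb : b ^ 2 = z * (1 + b ^ 7)) :
    (a - b) * (a + b - z * ∑ i ∈ Finset.range 7, a ^ i * b ^ (7 - 1 - i)) = 0 := by
  linear_combination ha - hb - z * geom_sum₂_mul a b 7

theorem norm_add_le_of_kernel_roots {z a b : ℂ} (ha : a ^ 2 = z * (1 + a ^ 7))
    (hb : b ^ 2 = z * (1 + b ^ 7)) (hab : a ≠ b) (ha1 : ‖a‖ ≤ 1) (hb1 : ‖b‖ ≤ 1) :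
    ‖a + b‖ ≤ 7 * ‖z‖ := by
  have hsum := kernel_roots_sub_mul_eq_zero ha hb
  rw [mul_eq_zero, sub_eq_zero, sub_eq_zero] at hsum
  have hgeom : ‖∑ i ∈ Finset.range 7, a ^ i * b ^ (7 - 1 - i)‖ ≤ 7 :=
    calc _ ≤ ∑ _i ∈ Finset.range 7, (1 : ℝ) := norm_sum_le_of_le _ fun i _ => by
            rw [norm_mul, norm_pow, norm_pow]
            exact mul_le_one₀ (pow_le_one₀ (norm_nonneg a) ha1) (by positivity)
              (pow_le_one₀ (norm_nonneg b) hb1)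
      _ = 7 := by simp
  rw [hsum.resolve_left hab, norm_mul, mul_comm 7]
  exact mul_le_mul_of_nonneg_left hgeom (norm_nonneg z)

theorem eq_of_kernel_roots_near {z a b c : ℂ} {t : ℝ} (ha : a ^ 2 = z * (1 + a ^ 7))
    (hb : b ^ 2 = z * (1 + b ^ 7)) (ha1 : ‖a‖ ≤ 1) (hb1 : ‖b‖ ≤ 1) (hac : ‖a - c‖ ≤ t)
    (hbc : ‖b - c‖ ≤ t) (h : 2 * t + 7 * ‖z‖ < 2 * ‖c‖) : a = b := by
  by_contra hab
  have h2c : 2 * ‖c‖ ≤ ‖a + b‖ + ‖a - c‖ + ‖b - c‖ :=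
    calc 2 * ‖c‖ = ‖(a + b) - (a - c) - (b - c)‖ := by
          rw [show (a + b) - (a - c) - (b - c) = 2 * c by ring, norm_mul, Complex.norm_two]
      _ ≤ _ := (norm_sub_le _ _).trans (by gcongr; exact norm_sub_le _ _)
  linarith [norm_add_le_of_kernel_roots ha hb hab ha1 hb1]

theorem structRho_pos : 0 < structRho := by
  unfold structRho; positivity

theorem seven_mul_structRho_pow_seven : (7 * structRho) ^ 7 = 2 ^ 2 * 5 ^ 5 := by
  rw [structRho, mul_div_cancel₀ _ (by norm_num), one_div]
  exact_mod_cast Real.rpow_inv_natCast_pow (n := 7) (by norm_num) (by norm_num)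

theorem norm_eq_structRho_of_double_root {z u : ℂ} (hz : z ≠ 0) (hu : u ^ 2 = z * (1 + u ^ 7))
    (hdu : 2 * u = 7 * z * u ^ 6) : ‖z‖ = structRho := by
  have hzu : 7 * z = 5 * u ^ 2 := by linear_combination u * hdu - 7 * hu
  have hu0 : u ≠ 0 := by rintro rfl; simp [hz] at hzu
  have hu7 : u ^ 7 = 2 / 5 := by
    have : u ^ 2 * (5 * u ^ 7 - 2) = 0 := by linear_combination -(1 + u ^ 7) * hzu - 7 * hu
    linear_combination (((mul_eq_zero.1 this).resolve_left (pow_ne_zero 2 hu0))) / 5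
  have hnorm7 : ‖u‖ ^ 7 = 2 / 5 := by rw [← norm_pow, hu7]; norm_num
  have hnormz : 7 * ‖z‖ = 5 * ‖u‖ ^ 2 := by
    simpa [norm_mul, norm_pow] using congrArg norm hzu
  have : (7 * ‖z‖) ^ 7 = (7 * structRho) ^ 7 := by
    rw [seven_mul_structRho_pow_seven, hnormz,
      show (5 * ‖u‖ ^ 2) ^ 7 = 5 ^ 7 * (‖u‖ ^ 7) ^ 2 by ring, hnorm7]
    norm_num
  linarith [(pow_left_inj₀ (by positivity) (by linarith [structRho_pos]) (by norm_num)).1 this]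

theorem kernel_root_rotate {ω z v : ℂ} (hω : ω ^ 7 = 1) (hv : v ^ 2 = ω * z * (1 + v ^ 7)) :
    (ω ^ 3 * v) ^ 2 = z * (1 + (ω ^ 3 * v) ^ 7) := by
  linear_combination ω ^ 6 * hv + z * (1 - v ^ 7 * ω ^ 7 * (ω ^ 7 + 1)) * hω

theorem omega7_eq_exp : omega7 = exp (↑(2 * π / 7) * I) := by
  rw [omega7]; push_cast; ring_nf

theorem omega7_pow_seven : omega7 ^ 7 = 1 := by
  rw [omega7_eq_exp, ← Complex.exp_nat_mul, ← exp_two_pi_mul_I]; push_cast; ring_nf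

theorem norm_omega7 : ‖omega7‖ = 1 := by
  rw [omega7_eq_exp, norm_exp_ofReal_mul_I]

theorem arg_omega7 : arg omega7 = 2 * π / 7 := by
  rw [omega7_eq_exp, arg_exp_mul_I, toIocMod_eq_self]
  constructor <;> linarith [pi_pos]

theorem omega7_eq_exp_sq : omega7 = exp (↑(π / 7) * I) ^ 2 := by
  rw [omega7_eq_exp, ← Complex.exp_nat_mul]; push_cast; ring_nf

theorem omega7_pow_three_mul_exp : omega7 ^ 3 * exp (↑(π / 7) * I) = -1 := by
  rw [omega7_eq_exp_sq, ← pow_mul, ← pow_succ, ← Complex.exp_nat_mul, ← exp_pi_mul_I]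
  push_cast; ring_nf

theorem omega7_mul_mem_slitPlane {z : ℂ} (hz : z ∈ slitPlane) (harg : arg z < π - 2 * π / 7) :
    omega7 * z ∈ slitPlane := by
  have hω : omega7 ≠ 0 := norm_ne_zero_iff.1 (by rw [norm_omega7]; norm_num)
  have hsum : arg omega7 + arg z < π := by rw [arg_omega7]; linarith
  rw [mem_slitPlane_iff_arg, arg_mul hω (slitPlane_ne_zero hz)
    ⟨by rw [arg_omega7]; linarith [neg_pi_lt_arg z, pi_pos], hsum.le⟩]
  exact ⟨hsum.ne, mul_ne_zero hω (slitPlane_ne_zero hz)⟩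

theorem mem_slitDisk_of_mem_slitPlane {z : ℂ} (hz : z ∈ slitPlane) (hzρ : ‖z‖ ≤ structRho) :
    z ∈ slitDisk :=
  ⟨hzρ, (mem_slitPlane_iff.1 hz).symm.imp_right le_of_lt⟩

theorem sq_mem_slitPlane {w : ℂ} (hw : 0 < w.re) : w ^ 2 ∈ slitPlane := by
  rw [mem_slitPlane_iff, sq, mul_re, mul_im]
  by_cases him : w.im = 0
  · left; simp [him, hw]
  · right
    rw [mul_comm w.im, ← two_mul]
    exact mul_ne_zero two_ne_zero (mul_ne_zero hw.ne' him)

def slitSector (r α : ℝ) : Set ℂ := {z ∈ slitPlane | ‖z‖ < r ∧ arg z < α}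

theorem slitSector_eq_preimage (r α : ℝ) :
    slitSector r α =
      Complex.polarCoord.source ∩ Complex.polarCoord ⁻¹' (Iio r ×ˢ Iio α : Set (ℝ × ℝ)) := by
  ext z
  simp +contextual [slitSector, Complex.polarCoord_source, Complex.polarCoord_apply, and_assoc]

theorem isOpen_slitSector (r α : ℝ) : IsOpen (slitSector r α) := by
  rw [slitSector_eq_preimage]
  exact Complex.polarCoord.isOpen_inter_preimage (isOpen_Iio.prod isOpen_Iio)

theorem isPreconnected_slitSector (r α : ℝ) : IsPreconnected (slitSector r α) := by
  rw [slitSector_eq_preimage, ← Complex.polarCoord.source_inter_preimage_target_inter,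
    ← Complex.polarCoord.symm_image_target_inter_eq]
  refine IsPreconnected.image ?_ _ (Complex.polarCoord.continuousOn_symm.mono inter_subset_left)
  rw [Complex.polarCoord_target]
  exact (((convex_Ioi 0).prod (convex_Ioo _ _)).inter
    ((convex_Iio r).prod (convex_Iio α))).isPreconnected

theorem subset_closure_slitSector (r α : ℝ) :
    {z ∈ slitPlane | ‖z‖ ≤ r ∧ arg z < α} ⊆ closure (slitSector r α) := by
  rintro z ⟨hz, hzr, hzα⟩
  have hz0 : 0 < ‖z‖ := norm_pos_iff.2 (slitPlane_ne_zero hz)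
  have hlim : Tendsto (fun t : ℝ => (t : ℂ) * z) (𝓝[<] 1) (𝓝 z) := by
    have : Continuous fun t : ℝ => (t : ℂ) * z := by fun_prop
    simpa using (this.tendsto 1).mono_left nhdsWithin_le_nhds
  refine mem_closure_of_tendsto hlim ?_
  filter_upwards [Ioo_mem_nhdsLT (zero_lt_one' ℝ)] with t ⟨ht0, ht1⟩
  refine ⟨?_, ?_, by rwa [arg_real_mul z ht0]⟩
  · rw [mem_slitPlane_iff_arg, arg_real_mul z ht0]
    exact ⟨slitPlane_arg_ne_pi hz, mul_ne_zero (ofReal_ne_zero.2 ht0.ne') (slitPlane_ne_zero hz)⟩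
  · rw [norm_mul, norm_real, Real.norm_of_nonneg ht0.le]
    nlinarith

theorem Complex.re_ne_zero_of_norm_sq_sub_one_lt_one {w : ℂ} (h : ‖w ^ 2 - 1‖ < 1) :
    w.re ≠ 0 := by
  intro hre
  have : w ^ 2 - 1 = ((-(w.im ^ 2 + 1) : ℝ) : ℂ) := by
    apply Complex.ext <;> simp [sq, hre]; ring
  rw [this, norm_real, Real.norm_eq_abs, abs_neg, abs_of_pos (by positivity)] at h
  nlinarith [sq_nonneg w.im]

theorem Complex.norm_sub_one_le_norm_sq_sub_one {w : ℂ} (h : 0 ≤ w.re) :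
    ‖w - 1‖ ≤ ‖w ^ 2 - 1‖ := by
  have h1 : 1 ≤ ‖w + 1‖ := by
    have := re_le_norm (w + 1); simp only [add_re, one_re] at this; linarith
  calc ‖w - 1‖ ≤ ‖w - 1‖ * ‖w + 1‖ := le_mul_of_one_le_right (norm_nonneg _) h1
    _ = ‖w ^ 2 - 1‖ := by rw [← norm_mul]; ring_nf

theorem IsPreconnected.norm_sub_one_le_of_norm_sq_sub_one_lt_one {X : Type*}
    [TopologicalSpace X] {s : Set X} (hs : IsPreconnected s) {f : X → ℂ} (hf : ContinuousOn f s)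
    (hsq : ∀ x ∈ s, ‖f x ^ 2 - 1‖ < 1) {x₀ : X} (hx₀ : x₀ ∈ s) (hre : 0 < (f x₀).re) :
    ∀ x ∈ s, ‖f x - 1‖ ≤ ‖f x ^ 2 - 1‖ := by
  intro x hx
  refine norm_sub_one_le_norm_sq_sub_one (le_of_not_gt fun hneg => ?_)
  obtain ⟨y, hy, hy0⟩ :=
    hs.intermediate_value hx hx₀ (continuous_re.comp_continuousOn hf) ⟨hneg.le, hre.le⟩
  exact re_ne_zero_of_norm_sq_sub_one_lt_one (hsq y hy) hy0

theorem eqOn_of_kernel_roots {U : Set ℂ} (hUo : IsOpen U) (hUc : IsPreconnected U)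
    (hU : U ⊆ Metric.ball 0 structRho \ {0}) {F G : ℂ → ℂ} (hF : ContinuousOn F U)
    (hG : ContinuousOn G U) (hkF : ∀ z ∈ U, F z ^ 2 = z * (1 + F z ^ 7))
    (hkG : ∀ z ∈ U, G z ^ 2 = z * (1 + G z ^ 7)) {z₀ : ℂ} (hz₀ : z₀ ∈ U) (h₀ : F z₀ = G z₀) :
    EqOn F G U := by
  have hEq : IsOpen {z ∈ U | F z = G z} := by
    refine isOpen_iff_mem_nhds.2 fun z ⟨hz, hFG⟩ => ?_
    have hFz := hF.continuousAt (hUo.mem_nhds hz)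
    have hGz := hG.continuousAt (hUo.mem_nhds hz)
    set φ : ℂ → ℂ := fun w => F w + G w - w * ∑ i ∈ Finset.range 7, F w ^ i * G w ^ (7 - 1 - i)
    have hφ : ContinuousAt φ z := by fun_prop
    -- at a point where the branches meet, `φ` is the `u`-derivative of the kernel
    have hφz : φ z ≠ 0 := by
      obtain ⟨hzρ, hz0⟩ := hU hz
      intro h
      simp only [φ, ← hFG, geom_sum₂_self] at h
      exact (mem_ball_zero_iff.1 hzρ).ne (norm_eq_structRho_of_double_root hz0 (hkF z hz)
        (by linear_combination h))
    filter_upwards [hφ.eventually_ne hφz, hUo.mem_nhds hz] with w hφw hw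
    have hfactor := kernel_roots_sub_mul_eq_zero (hkF w hw) (hkG w hw)
    exact ⟨hw, sub_eq_zero.1 ((mul_eq_zero.1 hfactor).resolve_right hφw)⟩
  have hNe : IsOpen {z ∈ U | F z ≠ G z} := by
    refine isOpen_iff_mem_nhds.2 fun z ⟨hz, hFG⟩ => ?_
    have hFGz := (hF.continuousAt (hUo.mem_nhds hz)).sub (hG.continuousAt (hUo.mem_nhds hz))
    filter_upwards [hFGz.eventually_ne (sub_ne_zero.2 hFG), hUo.mem_nhds hz] with w hw hwU
    exact ⟨hwU, sub_ne_zero.1 hw⟩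
  intro z hz
  refine (hUc.subset_left_of_subset_union hEq hNe
    (disjoint_left.2 fun w h₁ h₂ => h₂.2 h₁.2) (fun w hw => ?_) ⟨z₀, hz₀, hz₀, h₀⟩ hz).2
  exact (em (F w = G w)).imp (⟨hw, ·⟩) (⟨hw, ·⟩)

theorem norm_kernel_branch_sq_sub_le {u : ℂ → ℂ} (hc : ContinuousOn u slitDisk)
    (hk : ∀ z ∈ slitDisk, u z ^ 2 = z * (1 + u z ^ 7)) {δ : ℝ} (hδ : 0 < δ)
    (hδρ : δ ^ 2 ≤ structRho) (hsmall : ∀ z ∈ slitDisk, ‖z‖ ≤ δ ^ 2 → ‖u z‖ ≤ 1 / 2)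
    (hre : 0 < (u ((δ : ℂ) ^ 2)).re) {w : ℂ} (hw : 0 < w.re) (hwδ : ‖w‖ ≤ δ) :
    ‖u (w ^ 2) - w‖ ≤ ‖w‖ / 128 := by
  set H := {v : ℂ | 0 < v.re} ∩ Metric.closedBall 0 δ
  have hH : IsPreconnected H :=
    ((convex_halfSpace_re_gt 0).inter (convex_closedBall 0 δ)).isPreconnected
  have hnorm : ∀ v ∈ H, ‖v ^ 2‖ ≤ δ ^ 2 := fun v hv => by
    rw [norm_pow]; gcongr; exact mem_closedBall_zero_iff.1 hv.2
  have hmem : ∀ v ∈ H, v ^ 2 ∈ slitDisk := fun v hv =>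
    mem_slitDisk_of_mem_slitPlane (sq_mem_slitPlane hv.1) ((hnorm v hv).trans hδρ)
  have hne : ∀ v ∈ H, v ≠ 0 := fun v hv h => by simp [H, h] at hv
  have hsq : ∀ v ∈ H, ‖(u (v ^ 2) / v) ^ 2 - 1‖ ≤ 1 / 128 := by
    intro v hv
    have : (u (v ^ 2) / v) ^ 2 - 1 = u (v ^ 2) ^ 7 := by
      field_simp [hne v hv]; linear_combination hk _ (hmem v hv)
    rw [this, norm_pow]
    calc ‖u (v ^ 2)‖ ^ 7 ≤ (1 / 2) ^ 7 := by
          gcongr; exact hsmall _ (hmem v hv) (hnorm v hv)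
      _ = 1 / 128 := by norm_num
  have hcont : ContinuousOn (fun v => u (v ^ 2) / v) H :=
    (hc.comp (continuous_pow 2).continuousOn hmem).div continuousOn_id hne
  have hδH : (δ : ℂ) ∈ H := ⟨by simpa using hδ, by simp [abs_of_pos hδ]⟩
  have key := hH.norm_sub_one_le_of_norm_sq_sub_one_lt_one hcont
    (fun v hv => (hsq v hv).trans_lt (by norm_num)) hδH
    (by simpa [div_ofReal_re] using div_pos hre hδ)
  have hwH : w ∈ H := ⟨hw, mem_closedBall_zero_iff.2 hwδ⟩
  calc ‖u (w ^ 2) - w‖ = ‖w‖ * ‖u (w ^ 2) / w - 1‖ := by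
        rw [← norm_mul, mul_sub, mul_div_cancel₀ _ (hne w hwH), mul_one]
    _ ≤ ‖w‖ * (1 / 128) := by gcongr; exact (key w hwH).trans (hsq w hwH)
    _ = ‖w‖ / 128 := by ring

theorem exists_radius_small_branches {u₁ u₂ : ℂ → ℂ} (hc₁ : ContinuousOn u₁ slitDisk)
    (hc₂ : ContinuousOn u₂ slitDisk) (h0₁ : u₁ 0 = 0) (h0₂ : u₂ 0 = 0) :
    ∃ δ > 0, δ ≤ 1 / 20 ∧ δ ^ 2 < structRho ∧
      ∀ z ∈ slitDisk, ‖z‖ ≤ δ ^ 2 → ‖u₁ z‖ ≤ 1 / 2 ∧ ‖u₂ z‖ ≤ 1 / 2 := by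
  have h00 : (0 : ℂ) ∈ slitDisk := ⟨by simpa using structRho_pos.le, Or.inr le_rfl⟩
  obtain ⟨ε₁, hε₁, h₁⟩ := Metric.continuousWithinAt_iff.1 (hc₁ 0 h00) (1 / 2) (by norm_num)
  obtain ⟨ε₂, hε₂, h₂⟩ := Metric.continuousWithinAt_iff.1 (hc₂ 0 h00) (1 / 2) (by norm_num)
  set δ := min (min ε₁ ε₂) (min structRho (1 / 20))
  have hδ : 0 < δ := lt_min (lt_min hε₁ hε₂) (lt_min structRho_pos (by norm_num))
  have hδ20 : δ ≤ 1 / 20 := (min_le_right _ _).trans (min_le_right _ _)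
  have hδsq : δ ^ 2 < δ := by nlinarith
  refine ⟨δ, hδ, hδ20, hδsq.trans_le ((min_le_right _ _).trans (min_le_left _ _)), ?_⟩
  intro z hz hzδ
  have hz0 : ∀ ε, δ ≤ ε → dist z 0 < ε := fun ε hε => by
    rw [dist_zero_right]; linarith
  have hu₁ := h₁ hz (hz0 ε₁ ((min_le_left _ _).trans (min_le_left _ _)))
  have hu₂ := h₂ hz (hz0 ε₂ ((min_le_left _ _).trans (min_le_right _ _)))
  rw [h0₁, dist_zero_right] at hu₁
  rw [h0₂, dist_zero_right] at hu₂
  exact ⟨hu₁.le, hu₂.le⟩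

theorem norm_small_branches_sq_sub_le {u₁ u₂ : ℂ → ℂ} (hc₁ : ContinuousOn u₁ slitDisk)
    (hk₁ : ∀ z ∈ slitDisk, u₁ z ^ 2 = z * (1 + u₁ z ^ 7))
    (hk₂ : ∀ z ∈ slitDisk, u₂ z ^ 2 = z * (1 + u₂ z ^ 7))
    (hne : ∀ z ∈ slitDisk, z ≠ 0 → u₁ z ≠ u₂ z) {δ : ℝ} (hδ : 0 < δ) (hδρ : δ ^ 2 ≤ structRho)
    (hsmall : ∀ z ∈ slitDisk, ‖z‖ ≤ δ ^ 2 → ‖u₁ z‖ ≤ 1 / 2 ∧ ‖u₂ z‖ ≤ 1 / 2)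
    (hre : 0 < (u₁ ((δ : ℂ) ^ 2)).re) (w : ℂ) (hw : 0 < w.re) (hwδ : ‖w‖ = δ) :
    ‖u₁ (w ^ 2) - w‖ ≤ δ / 128 + 7 * δ ^ 2 ∧ ‖u₂ (w ^ 2) + w‖ ≤ δ / 128 + 7 * δ ^ 2 := by
  have hnorm : ‖w ^ 2‖ = δ ^ 2 := by rw [norm_pow, hwδ]
  have hmem := mem_slitDisk_of_mem_slitPlane (sq_mem_slitPlane hw) (hnorm.trans_le hδρ)
  have h₁ := norm_kernel_branch_sq_sub_le hc₁ hk₁ hδ hδρ (fun z hz h => (hsmall z hz h).1)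
    hre hw hwδ.le
  obtain ⟨hs₁, hs₂⟩ := hsmall _ hmem hnorm.le
  have hsum := norm_add_le_of_kernel_roots (hk₁ _ hmem) (hk₂ _ hmem)
    (hne _ hmem (pow_ne_zero 2 (ne_zero_of_re_pos hw))) (hs₁.trans (by norm_num))
    (hs₂.trans (by norm_num))
  have h₂ : ‖u₂ (w ^ 2) + w‖ ≤ ‖u₁ (w ^ 2) + u₂ (w ^ 2)‖ + ‖u₁ (w ^ 2) - w‖ := by
    rw [show u₂ (w ^ 2) + w = (u₁ (w ^ 2) + u₂ (w ^ 2)) - (u₁ (w ^ 2) - w) by ring]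
    exact norm_sub_le _ _
  rw [hnorm] at hsum
  rw [hwδ] at h₁
  have : 0 ≤ 7 * δ ^ 2 := by positivity
  exact ⟨by linarith, by linarith⟩

theorem kernel_branches_rotation_seed {u₁ u₂ : ℂ → ℂ} (hc₁ : ContinuousOn u₁ slitDisk)
    (hk₁ : ∀ z ∈ slitDisk, u₁ z ^ 2 = z * (1 + u₁ z ^ 7))
    (hk₂ : ∀ z ∈ slitDisk, u₂ z ^ 2 = z * (1 + u₂ z ^ 7))
    (hne : ∀ z ∈ slitDisk, z ≠ 0 → u₁ z ≠ u₂ z) {δ : ℝ} (hδ : 0 < δ) (hδ20 : δ ≤ 1 / 20)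
    (hδρ : δ ^ 2 < structRho)
    (hsmall : ∀ z ∈ slitDisk, ‖z‖ ≤ δ ^ 2 → ‖u₁ z‖ ≤ 1 / 2 ∧ ‖u₂ z‖ ≤ 1 / 2)
    (hre : 0 < (u₁ ((δ : ℂ) ^ 2)).re) :
    omega7 ^ 3 * u₁ (omega7 * δ ^ 2) = u₂ (δ ^ 2) ∧
      omega7 ^ 3 * u₂ (omega7 * δ ^ 2) = u₁ (δ ^ 2) := by
  set η := exp (↑(π / 7) * I)
  have hmem : ∀ w : ℂ, 0 < w.re → ‖w‖ = δ → w ^ 2 ∈ slitDisk := fun w hw hwδ =>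
    mem_slitDisk_of_mem_slitPlane (sq_mem_slitPlane hw) (by rw [norm_pow, hwδ]; exact hδρ.le)
  have hδre : 0 < (δ : ℂ).re := by simpa using hδ
  have hδn : ‖(δ : ℂ)‖ = δ := by simp [hδ.le]
  have hη : 0 < η.re := by
    rw [exp_ofReal_mul_I_re]
    exact cos_pos_of_mem_Ioo ⟨by linarith [pi_pos], by linarith [pi_pos]⟩
  have hηδre : 0 < (η * δ).re := by simpa using mul_pos hη hδ
  have hηδn : ‖η * δ‖ = δ := by rw [norm_mul, norm_exp_ofReal_mul_I, hδn, one_mul]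
  have near := norm_small_branches_sq_sub_le hc₁ hk₁ hk₂ hne hδ hδρ.le hsmall hre
  obtain ⟨a₁, a₂⟩ := near _ hδre hδn
  obtain ⟨b₁, b₂⟩ := near _ hηδre hηδn
  have hmem₀ := hmem _ hδre hδn
  have hmem₁ := hmem _ hηδre hηδn
  rw [mul_pow, ← omega7_eq_exp_sq] at hmem₁ b₁ b₂
  have hωu : ∀ v : ℂ, ‖omega7 ^ 3 * v‖ = ‖v‖ := fun v => by simp [norm_omega7]
  have hbound : 2 * (δ / 128 + 7 * δ ^ 2) + 7 * ‖(δ : ℂ) ^ 2‖ < 2 * ‖(δ : ℂ)‖ := by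
    rw [norm_pow, hδn]
    nlinarith [mul_le_mul_of_nonneg_left hδ20 hδ.le]
  have hroot : ∀ v : ℂ → ℂ, (∀ z ∈ slitDisk, v z ^ 2 = z * (1 + v z ^ 7)) →
      (omega7 ^ 3 * v (omega7 * δ ^ 2)) ^ 2 = δ ^ 2 * (1 + (omega7 ^ 3 * v (omega7 * δ ^ 2)) ^ 7) :=
    fun v hk => kernel_root_rotate omega7_pow_seven (hk _ hmem₁)
  obtain ⟨hs₁, hs₂⟩ := hsmall _ hmem₀ (by rw [norm_pow, hδn])
  obtain ⟨hs₁', hs₂'⟩ := hsmall _ hmem₁ (by rw [norm_mul, norm_omega7, one_mul, norm_pow, hδn])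
  constructor
  · refine eq_of_kernel_roots_near (c := -δ) (hroot u₁ hk₁) (hk₂ _ hmem₀)
      (by rw [hωu]; linarith) (by linarith) ?_ (by simpa using a₂) (by simpa using hbound)
    rw [show omega7 ^ 3 * u₁ (omega7 * δ ^ 2) - -δ = omega7 ^ 3 * (u₁ (omega7 * δ ^ 2) - η * δ) by
      linear_combination (δ : ℂ) * omega7_pow_three_mul_exp, hωu]
    exact b₁
  · refine eq_of_kernel_roots_near (c := δ) (hroot u₂ hk₂) (hk₁ _ hmem₀)
      (by rw [hωu]; linarith) (by linarith) ?_ a₁ hbound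
    rw [show omega7 ^ 3 * u₂ (omega7 * δ ^ 2) - δ = omega7 ^ 3 * (u₂ (omega7 * δ ^ 2) + η * δ) by
      linear_combination -(δ : ℂ) * omega7_pow_three_mul_exp, hωu]
    exact b₂

theorem kernel_branch_rotate {F G : ℂ → ℂ} (hF : ContinuousOn F slitDisk)
    (hG : ContinuousOn G slitDisk) (hkF : ∀ z ∈ slitDisk, F z ^ 2 = z * (1 + F z ^ 7))
    (hkG : ∀ z ∈ slitDisk, G z ^ 2 = z * (1 + G z ^ 7)) {z₀ : ℂ}
    (hz₀ : z₀ ∈ slitSector structRho (π - 2 * π / 7)) (h₀ : omega7 ^ 3 * F (omega7 * z₀) = G z₀)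
    {z : ℂ} (hz : ‖z‖ ≤ structRho) (h0 : 0 < arg z) (h1 : arg z < π - 2 * π / 7) :
    F (omega7 * z) = omega7 ^ (-3 : ℤ) * G z := by
  set W := {w ∈ slitPlane | ‖w‖ ≤ structRho ∧ arg w < π - 2 * π / 7}
  have hW : W ⊆ slitDisk := fun w hw => mem_slitDisk_of_mem_slitPlane hw.1 hw.2.1
  have hωW : MapsTo (omega7 * ·) W slitDisk := fun w hw =>
    mem_slitDisk_of_mem_slitPlane (omega7_mul_mem_slitPlane hw.1 hw.2.2)
      (by rw [norm_mul, norm_omega7, one_mul]; exact hw.2.1)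
  have hS : slitSector structRho (π - 2 * π / 7) ⊆ W := fun w hw => ⟨hw.1, hw.2.1.le, hw.2.2⟩
  have hrot : ContinuousOn (fun w => omega7 ^ 3 * F (omega7 * w)) W :=
    continuousOn_const.mul (hF.comp (by fun_prop) hωW)
  have hsector : EqOn (fun w => omega7 ^ 3 * F (omega7 * w)) G
      (slitSector structRho (π - 2 * π / 7)) :=
    eqOn_of_kernel_roots (isOpen_slitSector _ _) (isPreconnected_slitSector _ _)
      (fun w hw => ⟨mem_ball_zero_iff.2 hw.2.1, slitPlane_ne_zero hw.1⟩) (hrot.mono hS)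
      (hG.mono (hS.trans hW))
      (fun w hw => kernel_root_rotate omega7_pow_seven (hkF _ (hωW (hS hw))))
      (fun w hw => hkG w (hW (hS hw))) hz₀ h₀
  have hzW : z ∈ W := by
    refine ⟨mem_slitPlane_iff_arg.2 ⟨by linarith [pi_pos], fun h => by simp [h] at h0⟩, hz, h1⟩
  have hωz : omega7 ^ 3 * F (omega7 * z) = G z :=
    hsector.of_subset_closure hrot (hG.mono hW) hS (subset_closure_slitSector _ _) hzW
  rw [← hωz, zpow_neg, zpow_ofNat, inv_mul_cancel_left₀ (pow_ne_zero 3 ?_)]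
  exact norm_ne_zero_iff.1 (by rw [norm_omega7]; norm_num)

/-- rotation law for slope 2/5.  Let `u₁, u₂` be the two small roots of
`u² = z(1+u⁷)`: continuous root selections on the slit disk, vanishing at `0`,
distinct away from `0`, with `u₁` the branch positive on the positive real axis.
Then for `|z| ≤ ρ` and `0 < arg z < π − 2π/7` one has
`u₁(ωz) = ω⁻³·u₂(z)` and `u₂(ωz) = ω⁻³·u₁(z)`. -/
theorem rotation_law_small_branches (u₁ u₂ : ℂ → ℂ)
    (hc₁ : ContinuousOn u₁ slitDisk) (hc₂ : ContinuousOn u₂ slitDisk)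
    (hk₁ : ∀ z ∈ slitDisk, (u₁ z) ^ 2 = z * (1 + (u₁ z) ^ 7))
    (hk₂ : ∀ z ∈ slitDisk, (u₂ z) ^ 2 = z * (1 + (u₂ z) ^ 7))
    (h0₁ : u₁ 0 = 0) (h0₂ : u₂ 0 = 0)
    (hne : ∀ z ∈ slitDisk, z ≠ 0 → u₁ z ≠ u₂ z)
    (hpos : ∀ x : ℝ, 0 < x → x < structRho → (u₁ (x : ℂ)).im = 0 ∧ 0 < (u₁ (x : ℂ)).re) :
    ∀ z : ℂ, ‖z‖ ≤ structRho →
      0 < Complex.arg z → Complex.arg z < Real.pi - 2 * Real.pi / 7 →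
      u₁ (omega7 * z) = omega7 ^ (-3 : ℤ) * u₂ z ∧
      u₂ (omega7 * z) = omega7 ^ (-3 : ℤ) * u₁ z := by
  obtain ⟨δ, hδ, hδ20, hδρ, hsmall⟩ := exists_radius_small_branches hc₁ hc₂ h0₁ h0₂
  have hre : 0 < (u₁ ((δ : ℂ) ^ 2)).re := by
    simpa using (hpos (δ ^ 2) (by positivity) hδρ).2
  obtain ⟨seed₁, seed₂⟩ :=
    kernel_branches_rotation_seed hc₁ hk₁ hk₂ hne hδ hδ20 hδρ hsmall hre
  have hδS : (δ : ℂ) ^ 2 ∈ slitSector structRho (π - 2 * π / 7) := by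
    refine ⟨sq_mem_slitPlane (by simpa using hδ), by simpa using hδρ, ?_⟩
    rw [← ofReal_pow, arg_ofReal_of_nonneg (by positivity)]
    linarith [pi_pos]
  intro z hz h0 h1
  exact ⟨kernel_branch_rotate hc₁ hc₂ hk₁ hk₂ hδS seed₁ hz h0 h1,
    kernel_branch_rotate hc₂ hc₁ hk₂ hk₁ hδS seed₂ hz h0 h1⟩
end

section
/- The constant κ₁ = α₁/β₁ in Knuth's asymptotics, given by κ₁ = −5/(μ⁴+2μ³+3μ²+4μ) − 1 where μ = τ₂/τ, τ = (2/5)^{1/7}, and τ₂ is the unique real root of 500t^{35}+3900t^{28}+13540t^{21}+27708t^{14}+37500t^{7}+3125, is a root of the polynomial 23x^5 − 41x^4 + 10x^3 − 6x^2 − x − 1. -/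
/-!
With `τ⁷ = 2/5` and `τ₂ = μτ`, the equation for `τ₂` says `f (2/5 μ⁷) = 0`, where `f` is the
quintic in `τ₂⁷`. Since `f' > 0`, `f` has a single real root. The quintic
`Q μ = 2μ⁵ + 4μ⁴ + 6μ³ + 8μ² + 10μ + 5` has a real root `μ₀` and `Q` divides `f (2/5 μ⁷)`,
so that root is `2/5 μ₀⁷`, and injectivity of `μ ↦ μ⁷` gives `μ = μ₀`. Finally
`Q μ = 2μ (μ⁴ + 2μ³ + 3μ² + 4μ) + 5 (2μ + 1)`, so `κ₁ = -1/(2μ + 1)`, and this Möbius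
substitution carries `Q` to the quintic of `κ₁`.
-/

def muQuintic {R : Type*} [CommRing R] (μ : R) : R :=
  2 * μ ^ 5 + 4 * μ ^ 4 + 6 * μ ^ 3 + 8 * μ ^ 2 + 10 * μ + 5

def tauQuintic {R : Type*} [CommRing R] (s : R) : R :=
  500 * s ^ 5 + 3900 * s ^ 4 + 13540 * s ^ 3 + 27708 * s ^ 2 + 37500 * s + 3125

def kappaQuintic {R : Type*} [CommRing R] (κ : R) : R :=
  23 * κ ^ 5 - 41 * κ ^ 4 + 10 * κ ^ 3 - 6 * κ ^ 2 - κ - 1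

section Field

variable {K : Type*} [Field K] [CharZero K] {μ : K}

lemma two_mul_add_one_ne_zero_of_muQuintic_eq_zero (h : muQuintic μ = 0) : 2 * μ + 1 ≠ 0 := by
  intro h'
  obtain rfl : μ = -1 / 2 := by linear_combination h' / 2
  norm_num [muQuintic] at h

lemma neg_five_div_sub_one_of_muQuintic_eq_zero (h : muQuintic μ = 0) :
    -5 / (μ ^ 4 + 2 * μ ^ 3 + 3 * μ ^ 2 + 4 * μ) - 1 = -1 / (2 * μ + 1) := by
  have h2 := two_mul_add_one_ne_zero_of_muQuintic_eq_zero h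
  have hD : 2 * μ * (μ ^ 4 + 2 * μ ^ 3 + 3 * μ ^ 2 + 4 * μ) = -5 * (2 * μ + 1) := by
    unfold muQuintic at h
    linear_combination h
  have hD0 : μ ^ 4 + 2 * μ ^ 3 + 3 * μ ^ 2 + 4 * μ ≠ 0 := by
    intro h0
    rw [h0, mul_zero] at hD
    exact h2 (by linear_combination hD / 5)
  rw [div_sub_one hD0, div_eq_div_iff hD0 h2]
  linear_combination -hD

lemma kappaQuintic_neg_inv_of_muQuintic_eq_zero (h : muQuintic μ = 0) :
    kappaQuintic (-1 / (2 * μ + 1)) = 0 := by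
  have h2 := two_mul_add_one_ne_zero_of_muQuintic_eq_zero h
  unfold muQuintic at h
  unfold kappaQuintic
  field_simp
  linear_combination -16 * h

/- `25 f (2/5 μ⁷)` is the product of `Q (ζμ)` over the seventh roots of unity `ζ`; the cofactor
below is the product over `ζ ≠ 1`. -/
lemma tauQuintic_seventh_of_muQuintic_eq_zero (h : muQuintic μ = 0) :
    tauQuintic (2 / 5 * μ ^ 7) = 0 := by
  unfold muQuintic at h
  unfold tauQuintic
  linear_combination (1 / 25 : K) * (15625 - 31250 * μ + 37500 * μ ^ 2 - 43750 * μ ^ 3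
    + 52500 * μ ^ 4 - 61250 * μ ^ 5 + 73500 * μ ^ 6 - 17000 * μ ^ 7 - 34600 * μ ^ 8
    + 36200 * μ ^ 9 - 30940 * μ ^ 10 + 29680 * μ ^ 11 - 18816 * μ ^ 12 + 12152 * μ ^ 13
    + 2624 * μ ^ 14 - 13480 * μ ^ 15 + 11360 * μ ^ 16 - 6496 * μ ^ 17 + 4032 * μ ^ 18
    - 1568 * μ ^ 19 + 784 * μ ^ 20 + 1088 * μ ^ 21 - 2176 * μ ^ 22 + 1312 * μ ^ 23
    - 448 * μ ^ 24 + 224 * μ ^ 25 + 64 * μ ^ 28 - 128 * μ ^ 29 + 64 * μ ^ 30) * h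

end Field

lemma tauQuintic_strictMono : StrictMono (tauQuintic : ℝ → ℝ) := by
  refine strictMono_of_deriv_pos fun s => ?_
  have hderiv : deriv (tauQuintic : ℝ → ℝ) s =
      2500 * s ^ 4 + 15600 * s ^ 3 + 40620 * s ^ 2 + 55416 * s + 37500 := by
    unfold tauQuintic
    simp (disch := fun_prop)
    ring
  rw [hderiv]
  nlinarith [sq_nonneg (s ^ 2 + 3 * s), sq_nonneg (s + 2), sq_nonneg (s + 1)]

lemma exists_muQuintic_eq_zero : ∃ μ : ℝ, muQuintic μ = 0 := by
  have hcont : ContinuousOn (muQuintic : ℝ → ℝ) (Set.Icc (-1) 0) := by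
    unfold muQuintic
    fun_prop
  have hsign : (0 : ℝ) ∈ Set.Icc (muQuintic (-1)) (muQuintic 0) := by norm_num [muQuintic]
  obtain ⟨μ, -, hμ⟩ := intermediate_value_Icc (by norm_num) hcont hsign
  exact ⟨μ, hμ⟩

lemma muQuintic_eq_zero_of_tauQuintic_eq_zero {μ : ℝ} (h : tauQuintic (2 / 5 * μ ^ 7) = 0) :
    muQuintic μ = 0 := by
  obtain ⟨μ₀, h₀⟩ := exists_muQuintic_eq_zero
  have h7 : 2 / 5 * μ ^ 7 = 2 / 5 * μ₀ ^ 7 :=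
    tauQuintic_strictMono.injective (h.trans (tauQuintic_seventh_of_muQuintic_eq_zero h₀).symm)
  have hμ : μ = μ₀ :=
    (Odd.strictMono_pow (by decide)).injective (mul_left_cancel₀ (by norm_num) h7)
  rwa [hμ]

/-- Knuth's constant `κ₁`.  With `τ = (2/5)^{1/7}`, `τ₂` a real root of
`500t³⁵+3900t²⁸+13540t²¹+27708t¹⁴+37500t⁷+3125`, `μ = τ₂/τ`, the constant
`κ₁ = −5/(μ⁴+2μ³+3μ²+4μ) − 1` is a root of `23x⁵ − 41x⁴ + 10x³ − 6x² − x − 1`. -/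
theorem knuth_constant_kappa1 (τ τ₂ μ κ₁ : ℝ)
    (hτ : τ = (2 / 5 : ℝ) ^ ((1 : ℝ) / 7))
    (hτ₂ : 500 * τ₂ ^ 35 + 3900 * τ₂ ^ 28 + 13540 * τ₂ ^ 21 + 27708 * τ₂ ^ 14 +
        37500 * τ₂ ^ 7 + 3125 = 0)
    (hμ : μ = τ₂ / τ)
    (hκ₁ : κ₁ = -5 / (μ ^ 4 + 2 * μ ^ 3 + 3 * μ ^ 2 + 4 * μ) - 1) :
    23 * κ₁ ^ 5 - 41 * κ₁ ^ 4 + 10 * κ₁ ^ 3 - 6 * κ₁ ^ 2 - κ₁ - 1 = 0 := by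
  have hτ7 : τ ^ 7 = 2 / 5 := by
    rw [hτ, ← Real.rpow_natCast, ← Real.rpow_mul (by norm_num)]
    norm_num
  have hτ₂7 : τ₂ ^ 7 = 2 / 5 * μ ^ 7 := by
    rw [hμ, div_pow, hτ7]
    ring
  have hQ : muQuintic μ = 0 := by
    refine muQuintic_eq_zero_of_tauQuintic_eq_zero ?_
    rw [← hτ₂7]
    unfold tauQuintic
    linear_combination hτ₂
  rw [hκ₁, neg_five_div_sub_one_of_muQuintic_eq_zero hQ]
  exact kappaQuintic_neg_inv_of_muQuintic_eq_zero hQ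
end

section
/- Schur polynomial closed form for meanders: for walks on ℕ with step set {−a, +c} (a,c positive, coprime) starting at altitude h ≥ a, with u_1,…,u_a the small roots of 1 − z(u^{−a}+u^c) = 0, the generating function F_i(z) of walks ending at altitude i (0 ≤ i ≤ a−1) equals ((−1)^{a−i−1}/z)·s_{(h+1, 1^{a−i−1}, 0^{i})}(u_1,…,u_a), where s_λ denotes the Schur polynomial in a variables. -/
/-!
Kernel method. Let `W_n(u) = Σ_i F_{n,i} u^i` count meanders of length `n` by final altitude.
Removing the last step gives `u^a W_{n+1} = W_n - L_n + u^{a+c} W_n`, where `L_n` is the part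
of `W_n` below altitude `a`, from which no down-step is possible. When `u^a = z (1 + u^{a+c})`
this telescopes to `z Σ_{i<a} u^i Σ_{n<N} F_{n,i} z^n + z^N u^a W_N(u) = u^{a+h}` for every
`N`; for a root `u ∈ ℂ⟦X⟧` and `z = X^a` the error term tends to `0`, so
`z Σ_{i<a} u^i F_i(z) = u^{a+h}`. The `a` roots thus give a linear system for the `z F_i` whose
matrix is an alternant; by Cramer's rule `z F_i` is a quotient of two alternants, and moving the
replaced row to the top (a cycle of sign `(-1)^{a-i-1}`) makes the numerator the alternant of
`λ + δ`.
-/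


open PowerSeries

/-- `meanderCount a c h n i` = number of walks of length `n` on `ℕ` with altitude
jumps `−a, +c`, starting at altitude `h`, staying nonnegative, ending at altitude `i`. -/
noncomputable def meanderCount (a c h : ℕ) (n : ℕ) (i : ℤ) : ℕ :=
  Nat.card {w : List ℤ //
    w.length = n ∧ (∀ s ∈ w, s = -(a : ℤ) ∨ s = (c : ℤ)) ∧
    (∀ m : ℕ, 0 ≤ (h : ℤ) + (w.take m).sum) ∧ (h : ℤ) + w.sum = i}

/-- A series `Σ_n c_n z^n` rewritten in the variable `x` with `z = x^a`
(the `a` small roots of the kernel are power series in `x = z^{1/a}`). -/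
noncomputable def liftRootA (a : ℕ) (cnt : ℕ → ℕ) : PowerSeries ℂ :=
  PowerSeries.mk fun m => if a ∣ m then (cnt (m / a) : ℂ) else 0

/-- The partition `λ = (h+1, 1^{a−i−1}, 0^i)` (0-indexed entries). -/
def schurLambda (a h i : ℕ) (j : Fin a) : ℕ :=
  if (j : ℕ) = 0 then h + 1 else if (j : ℕ) ≤ a - i - 1 then 1 else 0

def meanderSet (a c h n : ℕ) (i : ℤ) : Set (List ℤ) :=
  {w | w.length = n ∧ (∀ s ∈ w, s = -(a : ℤ) ∨ s = (c : ℤ)) ∧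
    (∀ m : ℕ, 0 ≤ (h : ℤ) + (w.take m).sum) ∧ (h : ℤ) + w.sum = i}

section Meanders

variable {a c h n : ℕ} {i : ℤ}

lemma meanderCount_eq_ncard : meanderCount a c h n i = (meanderSet a c h n i).ncard := by
  rw [meanderCount, ← Nat.card_coe_set_eq]
  rfl

lemma meanderSet_finite : (meanderSet a c h n i).Finite := by
  refine ((List.finite_length_eq Bool n).image
    (List.map fun b : Bool => if b then (c : ℤ) else -(a : ℤ))).subset ?_
  rintro w ⟨hlen, hsteps, -, -⟩
  refine ⟨w.map fun s => decide (s = (c : ℤ)), by simpa using hlen, ?_⟩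
  rw [List.map_map]
  refine (List.map_congr_left fun s hs => ?_).trans w.map_id
  rcases hsteps s hs with rfl | rfl <;> simp; omega

lemma append_singleton_mem_meanderSet_iff {s : ℤ} {w : List ℤ} :
    w ++ [s] ∈ meanderSet a c h (n + 1) i ↔
      (s = -(a : ℤ) ∨ s = (c : ℤ)) ∧ 0 ≤ i ∧ w ∈ meanderSet a c h n (i - s) := by
  simp only [meanderSet, Set.mem_ofPred_eq, List.length_append, List.length_singleton,
    List.forall_mem_append, List.forall_mem_singleton, List.sum_append, List.sum_singleton]
  constructor
  · rintro ⟨hl, ⟨hmw, hs⟩, htake, hsum⟩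
    have hlw : w.length = n := by omega
    refine ⟨hs, ?_, hlw, hmw, fun m => ?_, by omega⟩
    · have := htake (n + 1)
      rw [List.take_of_length_le (by simp [hlw]), List.sum_append, List.sum_singleton] at this
      omega
    · rcases le_or_gt m w.length with hm | hm
      · simpa [List.take_append_of_le_length hm] using htake m
      · simpa [List.take_of_length_le hm.le] using htake w.length
  · rintro ⟨hs, hi, hlw, hmw, htake, hsum⟩
    refine ⟨by omega, ⟨hmw, hs⟩, fun m => ?_, by omega⟩
    rcases le_or_gt m w.length with hm | hm
    · simpa [List.take_append_of_le_length hm] using htake m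
    · rw [List.take_of_length_le (by simp; omega), List.sum_append, List.sum_singleton]
      omega

lemma meanderSet_succ (hi : 0 ≤ i) :
    meanderSet a c h (n + 1) i =
      (· ++ [-(a : ℤ)]) '' meanderSet a c h n (i + a) ∪
        (· ++ [(c : ℤ)]) '' meanderSet a c h n (i - c) := by
  ext w
  rcases List.eq_nil_or_concat w with rfl | ⟨w, s, rfl⟩
  · simp [meanderSet]
  · rw [List.concat_eq_append, append_singleton_mem_meanderSet_iff]
    simp only [Set.mem_union, Set.mem_image, List.append_singleton_inj]
    constructor
    · rintro ⟨rfl | rfl, -, hw⟩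
      · exact Or.inl ⟨w, by rwa [sub_neg_eq_add] at hw, rfl, rfl⟩
      · exact Or.inr ⟨w, hw, rfl, rfl⟩
    · rintro (⟨w, hw, rfl, rfl⟩ | ⟨w, hw, rfl, rfl⟩)
      · exact ⟨Or.inl rfl, hi, by rwa [sub_neg_eq_add]⟩
      · exact ⟨Or.inr rfl, hi, hw⟩

lemma meanderCount_succ (ha : 0 < a) (hi : 0 ≤ i) :
    meanderCount a c h (n + 1) i =
      meanderCount a c h n (i + a) + meanderCount a c h n (i - c) := by
  have hdisj : Disjoint ((· ++ [-(a : ℤ)]) '' meanderSet a c h n (i + a))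
      ((· ++ [(c : ℤ)]) '' meanderSet a c h n (i - c)) := by
    rw [Set.disjoint_left]
    rintro _ ⟨w, -, rfl⟩ ⟨w', -, hw⟩
    have := (List.append_singleton_inj.mp hw).2
    omega
  rw [meanderCount_eq_ncard, meanderCount_eq_ncard, meanderCount_eq_ncard, meanderSet_succ hi,
    Set.ncard_union_eq hdisj (meanderSet_finite.image _) (meanderSet_finite.image _),
    Set.ncard_image_of_injective _ (List.append_left_injective _),
    Set.ncard_image_of_injective _ (List.append_left_injective _)]

lemma meanderCount_zero : meanderCount a c h 0 i = if i = h then 1 else 0 := by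
  have : meanderSet a c h 0 i = if i = h then {[]} else ∅ := by
    ext w
    simp only [meanderSet, Set.mem_ofPred_eq, List.length_eq_zero_iff]
    split_ifs with hi
    · constructor
      · exact fun hw => hw.1
      · rintro rfl
        simp [hi]
    · simp only [Set.mem_empty_iff_false, iff_false, not_and]
      rintro rfl - - hsum
      simp_all
  rw [meanderCount_eq_ncard, this]
  split_ifs <;> simp

lemma meanderCount_of_neg (hi : i < 0) : meanderCount a c h n i = 0 := by
  have : meanderSet a c h n i = ∅ := by
    ext w
    simp only [meanderSet, Set.mem_ofPred_eq, Set.mem_empty_iff_false, iff_false, not_and]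
    intro _ _ htake hsum
    have := htake w.length
    rw [List.take_length] at this
    omega
  rw [meanderCount_eq_ncard, this, Set.ncard_empty]

lemma meanderCount_of_lt (ha : 0 < a) (hi : h + c * n < i) : meanderCount a c h n i = 0 := by
  induction n generalizing i with
  | zero => rw [meanderCount_zero, if_neg (by omega)]
  | succ n ih =>
    rw [meanderCount_succ ha (le_trans (by positivity) hi.le),
      ih (by push_cast at hi ⊢; nlinarith), ih (by push_cast at hi ⊢; nlinarith)]

end Meanders

noncomputable def altitudePoly (a c h n : ℕ) : Polynomial ℤ :=
  ∑ k ∈ Finset.range (h + c * n + 1),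
    Polynomial.C (meanderCount a c h n k : ℤ) * Polynomial.X ^ k

section AltitudePoly

open Finset

variable {a c h : ℕ}

lemma coeff_altitudePoly (ha : 0 < a) (n k : ℕ) :
    (altitudePoly a c h n).coeff k = meanderCount a c h n k := by
  simp only [altitudePoly, Polynomial.finsetSum_coeff, Polynomial.coeff_C_mul_X_pow, sum_ite_eq,
    mem_range]
  split_ifs with hk
  · rfl
  · rw [meanderCount_of_lt ha (by omega), Nat.cast_zero]

lemma altitudePoly_zero (ha : 0 < a) : altitudePoly a c h 0 = Polynomial.X ^ h := by
  ext k
  rw [coeff_altitudePoly ha, meanderCount_zero, Polynomial.coeff_X_pow]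
  split_ifs <;> simp_all

lemma altitudePoly_succ (ha : 0 < a) (n : ℕ) :
    Polynomial.X ^ a * altitudePoly a c h (n + 1) =
      altitudePoly a c h n -
          ∑ k ∈ range a, Polynomial.C (meanderCount a c h n k : ℤ) * Polynomial.X ^ k +
        Polynomial.X ^ (a + c) * altitudePoly a c h n := by
  ext k
  simp only [Polynomial.coeff_add, Polynomial.coeff_sub, Polynomial.coeff_X_pow_mul',
    Polynomial.finsetSum_coeff, Polynomial.coeff_C_mul_X_pow, sum_ite_eq, mem_range,
    coeff_altitudePoly ha]
  rcases lt_or_ge k a with hk | hk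
  · simp [hk, Nat.not_le.mpr hk, show ¬ a + c ≤ k by omega]
  obtain ⟨j, rfl⟩ := Nat.exists_eq_add_of_le hk
  rw [if_pos hk, if_neg (by omega), Nat.add_sub_cancel_left,
    meanderCount_succ ha (Nat.cast_nonneg j), show ((a + j : ℕ) : ℤ) = j + a by push_cast; ring]
  split_ifs with hcj
  · rw [show ((a + j - (a + c) : ℕ) : ℤ) = j - c by omega]
    push_cast
    ring
  · rw [meanderCount_of_neg (i := (j : ℤ) - c) (by omega)]
    push_cast
    ring

end AltitudePoly

section KernelMethod

open Finset

variable {R : Type*} [CommRing R] {a c h : ℕ}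

lemma aeval_altitudePoly_succ (ha : 0 < a) (u : R) (n : ℕ) :
    u ^ a * Polynomial.aeval u (altitudePoly a c h (n + 1)) =
      Polynomial.aeval u (altitudePoly a c h n) -
          ∑ k ∈ range a, (meanderCount a c h n k : R) * u ^ k +
        u ^ (a + c) * Polynomial.aeval u (altitudePoly a c h n) := by
  simpa using congrArg (Polynomial.aeval u) (altitudePoly_succ (c := c) (h := h) ha n)

theorem kernel_telescoping (ha : 0 < a) {z u : R} (hker : u ^ a = z * (1 + u ^ (a + c)))
    (N : ℕ) :
    z * ∑ i ∈ range a, u ^ i * ∑ n ∈ range N, (meanderCount a c h n i : R) * z ^ n +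
        z ^ N * u ^ a * Polynomial.aeval u (altitudePoly a c h N) = u ^ (a + h) := by
  induction N with
  | zero => simp [altitudePoly_zero ha, pow_add]
  | succ N ih =>
    have hstep :
        ∑ i ∈ range a, u ^ i * ∑ n ∈ range (N + 1), (meanderCount a c h n i : R) * z ^ n =
        ∑ i ∈ range a, u ^ i * ∑ n ∈ range N, (meanderCount a c h n i : R) * z ^ n +
          z ^ N * ∑ k ∈ range a, (meanderCount a c h N k : R) * u ^ k := by
      simp only [sum_range_succ, mul_add, sum_add_distrib, mul_sum]
      congr 1
      exact sum_congr rfl fun k _ => by ring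
    rw [hstep]
    linear_combination ih + z ^ (N + 1) * aeval_altitudePoly_succ ha u N -
      z ^ N * Polynomial.aeval u (altitudePoly a c h N) * hker

end KernelMethod

lemma PowerSeries.eq_zero_of_forall_X_pow_dvd_s18 {R : Type*} [Semiring R] {f : R⟦X⟧}
    (h : ∀ n, X ^ n ∣ f) : f = 0 :=
  ext fun m => by simpa using X_pow_dvd_iff.mp (h (m + 1)) m m.lt_succ_self

open Finset in
lemma X_pow_dvd_liftRootA_sub_sum (a : ℕ) (f : ℕ → ℕ) (N : ℕ) :
    (X : ℂ⟦X⟧) ^ (a * N) ∣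
      liftRootA a f - ∑ n ∈ range N, (f n : ℂ⟦X⟧) * (X ^ a) ^ n := by
  rw [X_pow_dvd_iff]
  intro m hm
  have ha : 0 < a := Nat.pos_of_ne_zero (by rintro rfl; simp at hm)
  simp only [map_sub, map_sum, liftRootA, coeff_mk, ← pow_mul, ← map_natCast (C (R := ℂ)),
    coeff_C_mul_X_pow, sub_eq_zero]
  split_ifs with hdvd
  · obtain ⟨q, rfl⟩ := hdvd
    rw [Nat.mul_div_cancel_left q ha,
      sum_eq_single_of_mem q (mem_range.mpr (Nat.lt_of_mul_lt_mul_left hm)) fun n _ hn =>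
        if_neg fun hqn => hn (Nat.eq_of_mul_eq_mul_left ha hqn).symm, if_pos rfl]
  · exact (sum_eq_zero fun n _ => if_neg fun hmn => hdvd ⟨n, hmn⟩).symm

theorem X_pow_mul_sum_liftRootA_meanderCount {a c h : ℕ} (ha : 0 < a) {u : ℂ⟦X⟧}
    (hker : u ^ a = X ^ a * (1 + u ^ (a + c))) :
    X ^ a * ∑ i ∈ Finset.range a, u ^ i * liftRootA a (fun n => meanderCount a c h n i) =
      u ^ (a + h) := by
  rw [← sub_eq_zero]
  refine PowerSeries.eq_zero_of_forall_X_pow_dvd_s18 fun N =>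
    (pow_dvd_pow X (Nat.le_mul_of_pos_left N ha)).trans ?_
  rw [← kernel_telescoping ha hker N, ← pow_mul, sub_add_eq_sub_sub, ← mul_sub,
    ← Finset.sum_sub_distrib]
  simp only [← mul_sub]
  exact dvd_sub (dvd_mul_of_dvd_right (Finset.dvd_sum fun i _ =>
    dvd_mul_of_dvd_right (X_pow_dvd_liftRootA_sub_sum a _ N) _) _)
    (dvd_mul_of_dvd_left (dvd_mul_right _ _) _)

def alternantMatrix {R : Type*} [CommRing R] {a : ℕ} (u : Fin a → R) (e : Fin a → ℕ) :
    Matrix (Fin a) (Fin a) R :=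
  Matrix.of fun j k => u k ^ e j

section Alternant

variable {R : Type*} [CommRing R] {a : ℕ} (u : Fin a → R)

/-- The exponents `λ_j + a - 1 - j` are `a + h, a - 1, …, i + 1, i - 1, …, 0`. -/
lemma alternantMatrix_schurLambda_submatrix_cycleRange [NeZero a] (h : ℕ) (i : Fin a) :
    (alternantMatrix u fun j => schurLambda a h i j + (a - 1 - j)).submatrix
        (Fin.cycleRange i.rev) id =
      (alternantMatrix u fun j => a - 1 - j).updateRow i.rev fun k => u k ^ (a + h) := by
  ext j k
  simp only [alternantMatrix, Matrix.submatrix_apply, Matrix.updateRow_apply, Matrix.of_apply,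
    id_eq]
  rcases lt_trichotomy j i.rev with hj | rfl | hj
  · have hj' : (j : ℕ) < a - (i + 1) := by simpa [Fin.lt_def, Fin.val_rev] using hj
    rw [Fin.cycleRange_of_lt hj, if_neg hj.ne, schurLambda, Fin.val_add_one_of_lt' (by omega),
      if_neg (by omega), if_pos (by omega)]
    congr 1
    omega
  · rw [Fin.cycleRange_self, if_pos rfl, schurLambda, Fin.val_zero, if_pos rfl]
    have := i.pos
    congr 1
    omega
  · have hj' : a - (i + 1) < (j : ℕ) := by simpa [Fin.lt_def, Fin.val_rev] using hj
    rw [Fin.cycleRange_of_gt hj, if_neg hj.ne', schurLambda, if_neg (by omega),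
      if_neg (by omega), zero_add]

theorem det_alternantMatrix_mul_eq_neg_one_pow_mul_det_schur (h : ℕ) (F : Fin a → R)
    (hsys : ∀ k, ∑ i : Fin a, u k ^ (i : ℕ) * F i = u k ^ (a + h)) (i : Fin a) :
    (alternantMatrix u fun j => a - 1 - j).det * F i =
      (-1) ^ (a - i - 1) * (alternantMatrix u fun j => schurLambda a h i j + (a - 1 - j)).det := by
  have : NeZero a := NeZero.of_pos i.pos
  set V := alternantMatrix u fun j => a - 1 - j
  have hrow : (fun k => u k ^ (a + h)) = ∑ j, F j.rev • V j := by
    funext k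
    rw [← hsys k, Finset.sum_apply, ← Equiv.sum_comp Fin.revPerm]
    refine Finset.sum_congr rfl fun j _ => ?_
    simp only [Fin.revPerm_apply, Pi.smul_apply, smul_eq_mul, V, alternantMatrix,
      Matrix.of_apply, Fin.val_rev]
    rw [mul_comm]
    congr 2
    omega
  have hcramer : (V.updateRow i.rev fun k => u k ^ (a + h)).det = F i * V.det := by
    rw [hrow, Matrix.det_updateRow_sum, Fin.rev_rev, smul_eq_mul]
  have hperm := Matrix.det_permute (Fin.cycleRange i.rev)
    (alternantMatrix u fun j => schurLambda a h i j + (a - 1 - j))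
  rw [alternantMatrix_schurLambda_submatrix_cycleRange, hcramer, Fin.sign_cycleRange,
    Fin.val_rev, show a - (i + 1) = a - i - 1 by omega] at hperm
  push_cast at hperm
  linear_combination hperm

end Alternant

theorem schur_closed_form_meanders_general (a c h : ℕ)
    (u : Fin a → PowerSeries ℂ)
    (hker : ∀ j, (u j) ^ a = PowerSeries.X ^ a * (1 + (u j) ^ (a + c))) :
    ∀ i : Fin a,
      PowerSeries.X ^ a *
          Matrix.det (Matrix.of fun j k : Fin a => (u k) ^ (a - 1 - (j : ℕ))) *
          liftRootA a (fun n => meanderCount a c h n (i : ℤ)) =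
        (-1 : PowerSeries ℂ) ^ (a - (i : ℕ) - 1) *
          Matrix.det (Matrix.of fun j k : Fin a =>
            (u k) ^ (schurLambda a h (i : ℕ) j + (a - 1 - (j : ℕ)))) := by
  intro i
  have hsys : ∀ k, ∑ j : Fin a, u k ^ (j : ℕ) *
      (X ^ a * liftRootA a fun n => meanderCount a c h n j) = u k ^ (a + h) := fun k => by
    rw [← X_pow_mul_sum_liftRootA_meanderCount i.pos (hker k), Finset.mul_sum,
      ← Fin.sum_univ_eq_sum_range]
    exact Finset.sum_congr rfl fun j _ => by ring
  rw [mul_comm (X ^ a), mul_assoc]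
  exact det_alternantMatrix_mul_eq_neg_one_pow_mul_det_schur u h _ hsys i

/-- Schur polynomial closed form for meanders.  For walks on `ℕ` with
steps `{−a,+c}` (coprime, positive) starting at altitude `h ≥ a`, with `u₁,…,u_a` the
small roots of `1 − z(u^{−a}+u^c) = 0` (i.e. `u^a = z(1+u^{a+c})`, taken as power
series in `x = z^{1/a}` vanishing at 0), the generating function of walks ending at
altitude `i` equals `((−1)^{a−i−1}/z)·s_{(h+1,1^{a−i−1},0^i)}(u₁,…,u_a)`, stated via
the bialternant formula with the Vandermonde denominator cleared. -/
theorem schur_closed_form_meanders (a c h : ℕ) (ha : 0 < a) (hc : 0 < c)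
    (hcop : Nat.Coprime a c) (hh : a ≤ h)
    (u : Fin a → PowerSeries ℂ)
    (hu0 : ∀ j, PowerSeries.constantCoeff (u j) = 0)
    (hker : ∀ j, (u j) ^ a = PowerSeries.X ^ a * (1 + (u j) ^ (a + c)))
    (hne : ∀ j k, j ≠ k → u j ≠ u k) :
    ∀ i : Fin a,
      PowerSeries.X ^ a *
          Matrix.det (Matrix.of fun j k : Fin a => (u k) ^ (a - 1 - (j : ℕ))) *
          liftRootA a (fun n => meanderCount a c h n (i : ℤ)) =
        (-1 : PowerSeries ℂ) ^ (a - (i : ℕ) - 1) *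
          Matrix.det (Matrix.of fun j k : Fin a =>
            (u k) ^ (schurLambda a h (i : ℕ) j + (a - 1 - (j : ℕ)))) :=
  schur_closed_form_meanders_general a c h u hker
end

section
/- Lagrange-inversion step for general slope: let U(x) be the formal power series with U(0)=0 satisfying U(x) = x·(1 + U(x)^{a+c})^{1/a} (a,c positive integers, gcd(a,c)=1), and let h = ℓa + c for an integer ℓ ≥ 0. Then for positive integers s, [x^{a((a+c)s+ℓ−1)}] U(x)^h = (ℓa+c)/(a((a+c)s+ℓ−1)) · C((a+c)s+ℓ−1, as−1). -/
/-!
Write `U = X B` with `B(0) ≠ 0`. Since `N [X^N] U^h = h [X^{N-1}] U^{h-1} U'` and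
`U^N = X^N g(U)`, the coefficient `[X^{N-1}] U^{h-1} U'` is the formal residue of
`g(U) U' / U^{N-h+1}`. By linearity this reduces to the residues of `U^j U'` for `j ∈ ℤ`, which
vanish except for `j = -1`: for `j ≠ -1`, `U^j U'` is the derivative `(U^{j+1})' / (j+1)`, and
derivatives have no residue. For `g = (1 + u^{a+c})^M` the surviving coefficient is a binomial
coefficient.
-/

open PowerSeries Polynomial

namespace PowerSeries

variable {K : Type*} [Field K] [CharZero K] {B : K⟦X⟧}

-- With `U = X * B`, `coeff k (B⁻¹ ^ (k + 1) * U')` is the residue of `U' / U ^ (k + 1)`.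
theorem coeff_inv_pow_succ_mul_derivative_X_mul (hB : constantCoeff B ≠ 0) (k : ℕ) :
    coeff k (B⁻¹ ^ (k + 1) * d⁄dX K (X * B)) = if k = 0 then 1 else 0 := by
  have hBC : B * B⁻¹ = 1 := PowerSeries.mul_inv_cancel B hB
  have hD : d⁄dX K (X * B) = B + X * d⁄dX K B := by
    rw [Derivation.leibniz, derivative_X, smul_eq_mul, smul_eq_mul]; ring
  rcases k with _ | j
  · have : B⁻¹ ^ 1 * d⁄dX K (X * B) = 1 + X * (B⁻¹ * d⁄dX K B) := by
      rw [hD]; linear_combination hBC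
    rw [zero_add, this]
    simp
  -- `(j+1) B⁻ʲ⁻² U' = (j+1) F - X F'` with `F = B⁻ʲ⁻¹`, whose `(j+1)`-th coefficient vanishes.
  have key : ((j + 1 : ℕ) : K⟦X⟧) * (B⁻¹ ^ (j + 2) * d⁄dX K (X * B)) =
      ((j + 1 : ℕ) : K⟦X⟧) * B⁻¹ ^ (j + 1) - X * d⁄dX K (B⁻¹ ^ (j + 1)) := by
    rw [derivative_pow, derivative_inv', hD, Nat.add_sub_cancel]
    linear_combination ((j + 1 : ℕ) : K⟦X⟧) * B⁻¹ ^ (j + 1) * hBC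
  have hcoeff := congrArg (coeff (j + 1)) key
  rw [map_sub, ← map_natCast (C (R := K)), coeff_C_mul, coeff_C_mul, coeff_succ_X_mul,
    coeff_derivative] at hcoeff
  have hvanish : ((j + 1 : ℕ) : K) * coeff (j + 1) (B⁻¹ ^ (j + 2) * d⁄dX K (X * B)) = 0 := by
    rw [hcoeff]; push_cast; ring
  rw [if_neg j.succ_ne_zero]
  exact (mul_eq_zero.mp hvanish).resolve_left (Nat.cast_ne_zero.mpr j.succ_ne_zero)

theorem coeff_X_mul_pow_mul_inv_pow_succ_mul_derivative (hB : constantCoeff B ≠ 0) (i n : ℕ) :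
    coeff n ((X * B) ^ i * B⁻¹ ^ (n + 1) * d⁄dX K (X * B)) = if i = n then 1 else 0 := by
  rcases le_or_gt i n with hin | hni
  · obtain ⟨k, rfl⟩ := Nat.exists_eq_add_of_le hin
    have hBi : B ^ i * B⁻¹ ^ i = 1 := by
      rw [← mul_pow, PowerSeries.mul_inv_cancel B hB, one_pow]
    have hsplit : (X * B) ^ i * B⁻¹ ^ (i + k + 1) * d⁄dX K (X * B) =
        X ^ i * (B⁻¹ ^ (k + 1) * d⁄dX K (X * B)) := by
      rw [mul_pow, add_assoc, pow_add B⁻¹]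
      linear_combination (X ^ i * B⁻¹ ^ (k + 1) * d⁄dX K (X * B)) * hBi
    rw [hsplit, add_comm i k, coeff_X_pow_mul, coeff_inv_pow_succ_mul_derivative_X_mul hB]
    simp
  · rw [mul_pow, mul_assoc, mul_assoc, coeff_X_pow_mul', if_neg (by omega), if_neg (by omega)]

theorem coeff_aeval_mul_inv_pow_succ_mul_derivative (hB : constantCoeff B ≠ 0) (g : K[X])
    (n : ℕ) :
    coeff n (Polynomial.aeval (X * B) g * B⁻¹ ^ (n + 1) * d⁄dX K (X * B)) = g.coeff n := by
  induction g using Polynomial.induction_on' with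
  | add p q hp hq => rw [map_add, add_mul, add_mul, map_add, hp, hq, Polynomial.coeff_add]
  | monomial i r =>
    rw [aeval_monomial, algebraMap_eq, mul_assoc, mul_assoc, coeff_C_mul, ← mul_assoc,
      coeff_X_mul_pow_mul_inv_pow_succ_mul_derivative hB, Polynomial.coeff_monomial]
    split_ifs <;> simp

-- Lagrange inversion for `U = X φ(U)` with `φ = g^{1/N}`, stated without fractional powers.
theorem coeff_pow_eq_of_pow_eq_X_pow_mul_aeval {U : K⟦X⟧} (hU0 : constantCoeff U = 0)
    (hU1 : coeff 1 U ≠ 0) (g : K[X]) {N h : ℕ} (hN : 0 < N) (hhN : h ≤ N)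
    (hU : U ^ N = X ^ N * Polynomial.aeval U g) :
    coeff N (U ^ h) = h / N * g.coeff (N - h) := by
  obtain ⟨B, rfl⟩ := X_dvd_iff.mpr hU0
  have hB : constantCoeff B ≠ 0 := by
    rwa [coeff_succ_X_mul, coeff_zero_eq_constantCoeff_apply] at hU1
  rcases h with _ | k
  · simp [coeff_one, hN.ne']
  obtain ⟨n, rfl⟩ : ∃ n, N = n + k + 1 := ⟨N - (k + 1), by omega⟩
  have hBk : B ^ k = Polynomial.aeval (X * B) g * B⁻¹ ^ (n + 1) := by
    have hBN : B ^ (n + k + 1) = Polynomial.aeval (X * B) g := by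
      rw [mul_pow] at hU
      exact mul_left_cancel₀ (pow_ne_zero _ X_ne_zero) hU
    rw [← hBN, show n + k + 1 = k + (n + 1) by ring, pow_add, mul_assoc, ← mul_pow,
      PowerSeries.mul_inv_cancel B hB, one_pow, mul_one]
  have hderiv : ((n + k + 1 : ℕ) : K) * coeff (n + k + 1) ((X * B) ^ (k + 1)) =
      (k + 1) * g.coeff n := by
    calc ((n + k + 1 : ℕ) : K) * coeff (n + k + 1) ((X * B) ^ (k + 1))
        = coeff (n + k) (d⁄dX K ((X * B) ^ (k + 1))) := by
          rw [coeff_derivative]; push_cast; ring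
      _ = (k + 1) * coeff (n + k) (X ^ k * (B ^ k * d⁄dX K (X * B))) := by
          rw [derivative_pow, Nat.add_sub_cancel, mul_assoc, ← map_natCast (C (R := K)),
            coeff_C_mul, mul_pow, mul_assoc]
          push_cast; rfl
      _ = (k + 1) * g.coeff n := by
          rw [coeff_X_pow_mul, hBk, coeff_aeval_mul_inv_pow_succ_mul_derivative hB]
  rw [show n + k + 1 - (k + 1) = n by omega, div_mul_eq_mul_div,
    eq_div_iff (Nat.cast_ne_zero.mpr (by omega)), mul_comm, hderiv]
  push_cast; ring

end PowerSeries

theorem Polynomial.coeff_one_add_X_pow_pow_mul {R : Type*} [CommSemiring R] {d : ℕ} (hd : 0 < d)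
    (M m : ℕ) : ((1 + X ^ d : R[X]) ^ M).coeff (d * m) = M.choose m := by
  have hexpand : (1 + X ^ d : R[X]) ^ M = expand R d ((1 + X) ^ M) := by simp
  rw [hexpand, coeff_expand_mul' hd, coeff_one_add_X_pow]

theorem lagrange_inversion_general_slope_general (a c : ℕ) (ha : 0 < a) (hc : 0 < c) (U : PowerSeries ℚ)
    (hU0 : PowerSeries.constantCoeff U = 0)
    (hU1 : PowerSeries.coeff 1 U = 1)
    (hker : U ^ a = PowerSeries.X ^ a * (1 + U ^ (a + c)))
    (ℓ : ℕ) (s : ℕ) (hs : 0 < s) :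
    PowerSeries.coeff (a * ((a + c) * s + ℓ - 1)) (U ^ (ℓ * a + c)) =
      ((ℓ * a + c : ℚ)) / (a * ((a + c) * s + ℓ - 1)) *
        (((a + c) * s + ℓ - 1).choose (a * s - 1) : ℚ) := by
  have hM : 0 < (a + c) * s + ℓ - 1 := by
    have : a + c ≤ (a + c) * s := Nat.le_mul_of_pos_right _ hs
    omega
  have hN : a * ((a + c) * s + ℓ - 1) = (a + c) * (a * s - 1) + (ℓ * a + c) := by
    obtain ⟨m, hm⟩ : ∃ m, a * s = m + 1 := ⟨a * s - 1, by have := Nat.mul_pos ha hs; omega⟩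
    rw [show (a + c) * s + ℓ - 1 = m + c * s + ℓ by rw [add_mul]; omega, hm, Nat.add_sub_cancel]
    linear_combination c * hm
  have hpow : U ^ (a * ((a + c) * s + ℓ - 1)) = PowerSeries.X ^ (a * ((a + c) * s + ℓ - 1)) *
      Polynomial.aeval U ((1 + Polynomial.X ^ (a + c) : ℚ[X]) ^ ((a + c) * s + ℓ - 1)) := by
    rw [pow_mul, hker, mul_pow, ← pow_mul]
    simp
  rw [coeff_pow_eq_of_pow_eq_X_pow_mul_aeval hU0 (by simp [hU1]) _ (Nat.mul_pos ha hM)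
      (hN ▸ Nat.le_add_left _ _) hpow, hN, Nat.add_sub_cancel,
    Polynomial.coeff_one_add_X_pow_pow_mul (show 0 < a + c by omega), ← hN]
  push_cast [Nat.cast_sub (show 1 ≤ (a + c) * s + ℓ by omega)]
  rfl

/-- Lagrange-inversion step for general slope.  Let `U ∈ ℚ⟦x⟧` with
`U(0)=0` satisfy `U = x·(1+U^{a+c})^{1/a}` (equivalently: `U^a = x^a·(1+U^{a+c})`
with `[x¹]U = 1`), where `a,c` are coprime positive integers.  With `h = ℓa + c`,
for every positive integer `s`,
`[x^{a((a+c)s+ℓ−1)}] U^h = (ℓa+c)/(a((a+c)s+ℓ−1)) · C((a+c)s+ℓ−1, as−1)`. -/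
theorem lagrange_inversion_general_slope (a c : ℕ) (ha : 0 < a) (hc : 0 < c)
    (hcop : Nat.Coprime a c) (U : PowerSeries ℚ)
    (hU0 : PowerSeries.constantCoeff U = 0)
    (hU1 : PowerSeries.coeff 1 U = 1)
    (hker : U ^ a = PowerSeries.X ^ a * (1 + U ^ (a + c)))
    (ℓ : ℕ) (s : ℕ) (hs : 0 < s) :
    PowerSeries.coeff (a * ((a + c) * s + ℓ - 1)) (U ^ (ℓ * a + c)) =
      ((ℓ * a + c : ℚ)) / (a * ((a + c) * s + ℓ - 1)) *
        (((a + c) * s + ℓ - 1).choose (a * s - 1) : ℚ) :=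
  lagrange_inversion_general_slope_general a c ha hc U hU0 hU1 hker ℓ s hs
end
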